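/- arXiv:2409.20518 — 9 statements merged into one kernel-verified Lean document; each statement's English description precedes it below -/
import Mathlib

section
/- Let X be a subset of the Cantor space 𝒫(ℕ). Then X is Hurewicz if and only if for every continuous map Φ : X → ℕ^ℕ into the Baire space, the image Φ(X) is bounded, i.e., there is g ∈ ℕ^ℕ with Φ(x) ≤* g for all x ∈ X. -/
open Set Filter Cardinal

namespace OmissionOfIntervals

/-- The Cantor space `𝒫(ℕ)`, identified with `ℕ → Bool` via characteristic functions,
with the product topology. -/
abbrev CantorSp : Type := ℕ → Bool

/-- `Fin`: the points of the Cantor space coding finite subsets of `ℕ`. -/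
def CFin : Set CantorSp := {x | {n | x n = true}.Finite}

/-- `[ℕ]^∞`: the points of the Cantor space coding infinite subsets of `ℕ`. -/
def CInf : Set CantorSp := {x | {n | x n = true}.Infinite}

/-- Increasing enumeration of the subset of `ℕ` coded by `x`. -/
noncomputable def enum (x : CantorSp) : ℕ → ℕ := Nat.nth (fun n => x n = true)

/-- `f ≤* g`: `f n ≤ g n` for all but finitely many `n`. -/
def LeStar (f g : ℕ → ℕ) : Prop := ∀ᶠ n in atTop, f n ≤ g n

/-- `a ⊆* b`: the set coded by `a` is almost contained in the set coded by `b`. -/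
def SubStar (a b : CantorSp) : Prop := {n | a n = true ∧ ¬ b n = true}.Finite

/-- A dominating family in the Baire space. -/
def Dominating (S : Set (ℕ → ℕ)) : Prop := ∀ f : ℕ → ℕ, ∃ s ∈ S, LeStar f s

/-- An unbounded (with respect to `≤*`) family in the Baire space. -/
def UnboundedFam (S : Set (ℕ → ℕ)) : Prop := ¬ ∃ g : ℕ → ℕ, ∀ s ∈ S, LeStar s g

/-- The dominating number `𝔡`. -/
noncomputable def frd : Cardinal := sInf {c | ∃ S : Set (ℕ → ℕ), Dominating S ∧ #S = c}

/-- The bounding number `𝔟`. -/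
noncomputable def frb : Cardinal := sInf {c | ∃ S : Set (ℕ → ℕ), UnboundedFam S ∧ #S = c}

/-- A centered family of infinite subsets of `ℕ`: every finite subfamily has infinite
intersection. -/
def Centered (S : Set CantorSp) : Prop :=
  S ⊆ CInf ∧ ∀ F : Finset CantorSp, ↑F ⊆ S → {n | ∀ x ∈ F, x n = true}.Infinite

/-- `S` has a pseudointersection: an infinite set almost contained in every member of `S`. -/
def HasPseudointersection (S : Set CantorSp) : Prop := ∃ a ∈ CInf, ∀ s ∈ S, SubStar a s

/-- The pseudointersection number `𝔭`. -/
noncomputable def frp : Cardinal :=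
  sInf {c | ∃ S : Set CantorSp, Centered S ∧ ¬ HasPseudointersection S ∧ #S = c}

/-- `S ⊆ [ℕ]^∞` is `κ`-unbounded: `|S| ≥ κ` and for every `b : ℕ → ℕ` only `< κ` many
members of `S` satisfy `s(n) ≤ b(n)` for all `n` (via increasing enumerations). -/
def KappaUnbounded (κ : Cardinal) (S : Set CantorSp) : Prop :=
  κ ≤ #S ∧ ∀ b : ℕ → ℕ, #{s ∈ S | ∀ n, enum s n ≤ b n} < κ

/-- `X` is `κ`-concentrated on `CFin`: `|X| ≥ κ` and `|X ∖ U| < κ` for every open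
`U ⊇ CFin`. -/
def KappaConcentrated (κ : Cardinal) (X : Set CantorSp) : Prop :=
  κ ≤ #X ∧ ∀ U : Set CantorSp, IsOpen U → CFin ⊆ U → #(X \ U : Set CantorSp) < κ

/-- An open cover of the space `X`. -/
def IsOpenCover {X : Type*} [TopologicalSpace X] (𝒰 : Set (Set X)) : Prop :=
  (∀ U ∈ 𝒰, IsOpen U) ∧ ⋃₀ 𝒰 = Set.univ

/-- A point-cofinite (γ-) open cover of the space `X`: an infinite family of open sets such
that every point belongs to all but finitely many members. -/
def PointCofiniteCover {X : Type*} [TopologicalSpace X] (𝒰 : Set (Set X)) : Prop :=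
  (∀ U ∈ 𝒰, IsOpen U) ∧ 𝒰.Infinite ∧ ∀ x : X, {U ∈ 𝒰 | x ∉ U}.Finite

/-- An ω-cover of the space `X`: no member contains all of `X`, and every finite subset of
`X` is contained in some member. -/
def OmegaCover {X : Type*} [TopologicalSpace X] (𝒰 : Set (Set X)) : Prop :=
  (∀ U ∈ 𝒰, IsOpen U) ∧ (∀ U ∈ 𝒰, U ≠ Set.univ) ∧ ∀ F : Finset X, ∃ U ∈ 𝒰, ↑F ⊆ U

/-- An ω-cover of the subset `Y` by open subsets of the ambient space `X`. -/
def OmegaCoverOf {X : Type*} [TopologicalSpace X] (𝒰 : Set (Set X)) (Y : Set X) : Prop :=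
  (∀ U ∈ 𝒰, IsOpen U) ∧ (∀ U ∈ 𝒰, ¬ Y ⊆ U) ∧ ∀ F : Finset X, ↑F ⊆ Y → ∃ U ∈ 𝒰, ↑F ⊆ U

/-- The Menger property. -/
def Menger (X : Type*) [TopologicalSpace X] : Prop :=
  ∀ 𝒰 : ℕ → Set (Set X), (∀ n, IsOpenCover (𝒰 n)) →
    ∃ 𝓕 : ℕ → Set (Set X), (∀ n, 𝓕 n ⊆ 𝒰 n ∧ (𝓕 n).Finite) ∧ ⋃₀ (⋃ n, 𝓕 n) = Set.univ

/-- The Hurewicz property. -/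
def Hurewicz (X : Type*) [TopologicalSpace X] : Prop :=
  ∀ 𝒰 : ℕ → Set (Set X), (∀ n, IsOpenCover (𝒰 n)) →
    (∀ n, ¬ ∃ 𝓕 ⊆ 𝒰 n, 𝓕.Finite ∧ ⋃₀ 𝓕 = Set.univ) →
    ∃ 𝓕 : ℕ → Set (Set X), (∀ n, 𝓕 n ⊆ 𝒰 n ∧ (𝓕 n).Finite) ∧
      ∀ x : X, ∀ᶠ n in atTop, x ∈ ⋃₀ 𝓕 n

/-- The property `S1(Γ,Γ)`. -/
def S1GammaGamma (X : Type*) [TopologicalSpace X] : Prop :=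
  ∀ 𝒰 : ℕ → Set (Set X), (∀ n, PointCofiniteCover (𝒰 n)) →
    ∃ U : ℕ → Set X, (∀ n, U n ∈ 𝒰 n) ∧ ∀ x : X, ∀ᶠ n in atTop, x ∈ U n

/-- The property `S1(Γ,O)`. -/
def S1GammaO (X : Type*) [TopologicalSpace X] : Prop :=
  ∀ 𝒰 : ℕ → Set (Set X), (∀ n, PointCofiniteCover (𝒰 n)) →
    ∃ U : ℕ → Set X, (∀ n, U n ∈ 𝒰 n) ∧ (⋃ n, U n) = Set.univ

/-- The property `S1(Ω,Γ)`. -/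
def S1OmegaGamma (X : Type*) [TopologicalSpace X] : Prop :=
  ∀ 𝒰 : ℕ → Set (Set X), (∀ n, OmegaCover (𝒰 n)) →
    ∃ U : ℕ → Set X, (∀ n, U n ∈ 𝒰 n) ∧ ∀ x : X, ∀ᶠ n in atTop, x ∈ U n

/-- `X` is an ω-γ set: every open ω-cover has a subfamily that is a point-cofinite cover. -/
def OmegaGammaSet (X : Type*) [TopologicalSpace X] : Prop :=
  ∀ 𝒰 : Set (Set X), OmegaCover 𝒰 → ∃ 𝒱 ⊆ 𝒰, PointCofiniteCover 𝒱

/-- The property `U_k(Γ,Γ)`. -/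
def UkGammaGamma (k : ℕ) (X : Type*) [TopologicalSpace X] : Prop :=
  ∀ 𝒰 : ℕ → Set (Set X), (∀ n, PointCofiniteCover (𝒰 n)) →
    (∀ n, ¬ ∃ 𝓕 : Finset (Set X), ↑𝓕 ⊆ 𝒰 n ∧ 𝓕.card ≤ k ∧ ⋃₀ (↑𝓕 : Set (Set X)) = Set.univ) →
    ∃ 𝓕 : ℕ → Finset (Set X), (∀ n, ↑(𝓕 n) ⊆ 𝒰 n ∧ (𝓕 n).card ≤ k) ∧
      ∀ x : X, ∀ᶠ n in atTop, x ∈ ⋃₀ ((𝓕 n : Finset (Set X)) : Set (Set X))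

/-- The property `U_id(Γ,Γ)`. -/
def UidGammaGamma (X : Type*) [TopologicalSpace X] : Prop :=
  ∀ 𝒰 : ℕ → Set (Set X), (∀ n, PointCofiniteCover (𝒰 n)) →
    (∀ n, ¬ ∃ 𝓕 : Finset (Set X), ↑𝓕 ⊆ 𝒰 n ∧ ⋃₀ (↑𝓕 : Set (Set X)) = Set.univ) →
    ∃ 𝓕 : ℕ → Finset (Set X), (∀ n, ↑(𝓕 n) ⊆ 𝒰 n ∧ (𝓕 n).card ≤ n) ∧
      ∀ x : X, ∀ᶠ n in atTop, x ∈ ⋃₀ ((𝓕 n : Finset (Set X)) : Set (Set X))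

/-- The set of terms of an ordinal-indexed sequence, below the ordinal `o`. -/
def rangeBelow (s : Ordinal → CantorSp) (o : Ordinal) : Set CantorSp := {x | ∃ α < o, x = s α}

/-- `s`, restricted to ordinals below `frb.ord`, is a `𝔟`-scale: an unbounded,
`≤*`-increasing `𝔟`-sequence of infinite subsets of `ℕ`. -/
def IsBScale (s : Ordinal → CantorSp) : Prop :=
  (∀ α < frb.ord, s α ∈ CInf) ∧
  UnboundedFam {f | ∃ α < frb.ord, f = enum (s α)} ∧
  ∀ α β : Ordinal, α < β → β < frb.ord → LeStar (enum (s α)) (enum (s β))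

/-- `t`, restricted to ordinals below `κ.ord`, is a `κ`-tower:
`⊆*`-decreasing sequence of infinite subsets of `ℕ`. -/
def IsTower (κ : Cardinal) (t : Ordinal → CantorSp) : Prop :=
  (∀ α < κ.ord, t α ∈ CInf) ∧
  ∀ α β : Ordinal, α < β → β < κ.ord → SubStar (t β) (t α)

/-- An unbounded `κ`-tower. -/
def IsUnboundedTower (κ : Cardinal) (t : Ordinal → CantorSp) : Prop :=
  IsTower κ t ∧ UnboundedFam {f | ∃ α < κ.ord, f = enum (t α)}

/-- `a ⊑ b`: for all but finitely many `n`, the interval `[b(n), b(n+1)]` contains at least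
two elements of the set coded by `a`. -/
def SqSubset (a b : CantorSp) : Prop :=
  ∀ᶠ n in atTop,
    2 ≤ ((Finset.Icc (enum b n) (enum b (n + 1))).filter (fun k => a k = true)).card

/-- `s`, restricted to ordinals below `frb.ord`, is a `𝔟(⊑)`-scale. -/
def IsBSqScale (s : Ordinal → CantorSp) : Prop :=
  (∀ α < frb.ord, s α ∈ CInf) ∧
  UnboundedFam {f | ∃ α < frb.ord, f = enum (s α)} ∧
  ∀ α β : Ordinal, α < β → β < frb.ord → SqSubset (s α) (s β)

/-! A continuous `Φ : X → ℕ^ℕ` turns into the open covers `{x | Φ x n ≤ m}`, `m ∈ ℕ`, and a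
Hurewicz selection of finitely many members of each is a bound `g` for `Φ(X)`. Conversely, given
open covers `𝒰 n`, refine them by a fixed enumeration `C` of a clopen basis and let `Φ x n` be the
least `m` with `x ∈ C m` and `C m` inside a member of `𝒰 n`; since the `C m` are clopen, `Φ` is
locally constant, and a bound `g` for `Φ(X)` selects the finitely many members attached to
`m ≤ g n`. -/

open TopologicalSpace

theorem Monotone.exists_sUnion_subset {α ι : Type*} [Preorder ι] [IsDirectedOrder ι] [Nonempty ι]
    {V : ι → Set α} (hV : Monotone V) {𝓕 : Set (Set α)} (h𝓕 : 𝓕 ⊆ range V)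
    (hfin : 𝓕.Finite) : ∃ M, ⋃₀ 𝓕 ⊆ V M := by
  rw [← image_univ] at h𝓕
  obtain ⟨t, -, htfin, rfl⟩ := hfin.exists_subset_finite_image_eq h𝓕
  obtain ⟨M, hM⟩ := htfin.bddAbove
  exact ⟨M, sUnion_subset <| forall_mem_image.mpr fun i hi => hV (hM hi)⟩

section Hurewicz

variable {X : Type*} [TopologicalSpace X]

theorem Hurewicz.exists_eventually_mem_sUnion (hX : Hurewicz X) {𝒰 : ℕ → Set (Set X)}
    (h𝒰 : ∀ n, IsOpenCover (𝒰 n)) :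
    ∃ 𝓕 : ℕ → Set (Set X), (∀ n, 𝓕 n ⊆ 𝒰 n ∧ (𝓕 n).Finite) ∧
      ∀ x : X, ∀ᶠ n in atTop, x ∈ ⋃₀ 𝓕 n := by
  classical
  set A : Set ℕ := {n | ¬ ∃ 𝓕 ⊆ 𝒰 n, 𝓕.Finite ∧ ⋃₀ 𝓕 = Set.univ}
  have hG : ∀ n ∉ A, ∃ 𝓕 ⊆ 𝒰 n, 𝓕.Finite ∧ ⋃₀ 𝓕 = Set.univ := fun n hn => not_not.mp hn
  choose! G hG𝒰 hGfin hGcov using hG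
  rcases A.eq_empty_or_nonempty with hA | ⟨a, ha⟩
  · have hnA : ∀ n, n ∉ A := by simp [hA]
    refine ⟨G, fun n => ⟨hG𝒰 n (hnA n), hGfin n (hnA n)⟩, fun x => ?_⟩
    exact Eventually.of_forall fun n => hGcov n (hnA n) ▸ mem_univ x
  · -- Moving the indices outside `A` into `A` makes Hurewicz applicable.
    set σ : ℕ → ℕ := fun n => if n ∈ A then n else a
    have hσ : ∀ n, σ n ∈ A := fun n => by by_cases hn : n ∈ A <;> simp [σ, hn, ha]
    obtain ⟨H, hH, hHcov⟩ := hX (fun n => 𝒰 (σ n)) (fun n => h𝒰 (σ n)) hσ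
    refine ⟨fun n => if n ∈ A then H n else G n, fun n => ?_, fun x => ?_⟩
    · by_cases hn : n ∈ A
      · simpa [σ, hn] using hH n
      · simpa [hn] using ⟨hG𝒰 n hn, hGfin n hn⟩
    · filter_upwards [hHcov x] with n hxn
      by_cases hn : n ∈ A
      · simpa [hn] using hxn
      · simp [hn, hGcov n hn]

theorem Hurewicz.exists_forall_leStar (hX : Hurewicz X) {Φ : X → ℕ → ℕ} (hΦ : Continuous Φ) :
    ∃ g : ℕ → ℕ, ∀ x, LeStar (Φ x) g := by
  set V : ℕ → ℕ → Set X := fun n m => {x | Φ x n ≤ m}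
  have hV : ∀ n, Monotone (V n) := fun n _ _ hm _ hx => le_trans hx hm
  have hcover : ∀ n, IsOpenCover (range (V n)) := fun n =>
    ⟨forall_mem_range.mpr fun m => (isOpen_discrete (Iic m)).preimage
      ((continuous_apply n).comp hΦ),
    eq_univ_of_forall fun x => ⟨V n (Φ x n), mem_range_self _, le_refl (Φ x n)⟩⟩
  obtain ⟨𝓕, h𝓕, hx𝓕⟩ := hX.exists_eventually_mem_sUnion hcover
  choose g hg using fun n => Monotone.exists_sUnion_subset (hV n) (h𝓕 n).1 (h𝓕 n).2
  exact ⟨g, fun x => (hx𝓕 x).mono fun n hn => hg n hn⟩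

theorem exists_continuous_forall_mem_of_isClopen {D : ℕ → Set X} (hD : ∀ m, IsClopen (D m))
    (hcov : ∀ x, ∃ m, x ∈ D m) :
    ∃ φ : X → ℕ, Continuous φ ∧ ∀ x, x ∈ D (φ x) := by
  classical
  refine ⟨fun x => Nat.find (hcov x), continuous_discrete_rng.mpr fun m => ?_,
    fun x => Nat.find_spec (hcov x)⟩
  have hfiber : (fun x => Nat.find (hcov x)) ⁻¹' {m} = D m \ ⋃ k ∈ Iio m, D k := by
    ext x
    simp [Nat.find_eq_iff]
  rw [hfiber]
  exact (hD m).isOpen.sdiff <| (finite_Iio m).isClosed_biUnion fun k _ => (hD k).isClosed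

theorem hurewicz_of_forall_exists_leStar {C : ℕ → Set X}
    (hC : ∀ m, IsClopen (C m)) (hB : IsTopologicalBasis (range C))
    (h : ∀ Φ : X → ℕ → ℕ, Continuous Φ → ∃ g : ℕ → ℕ, ∀ x, LeStar (Φ x) g) : Hurewicz X := by
  intro 𝒰 h𝒰 _
  set P : ℕ → ℕ → Prop := fun n m => ∃ U ∈ 𝒰 n, C m ⊆ U
  set D : ℕ → ℕ → Set X := fun n m => {y | y ∈ C m ∧ P n m}
  have hD : ∀ n m, IsClopen (D n m) := fun n m => by
    by_cases hP : P n m <;> simp [D, hP, hC m, isClopen_empty]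
  have hcov : ∀ n x, ∃ m, x ∈ D n m := fun n x => by
    obtain ⟨U, hU, hxU⟩ := mem_sUnion.mp ((h𝒰 n).2.symm ▸ mem_univ x)
    obtain ⟨_, ⟨m, rfl⟩, hxm, hmU⟩ := hB.exists_subset_of_mem_open hxU ((h𝒰 n).1 U hU)
    exact ⟨m, hxm, U, hU, hmU⟩
  choose φ hφ hφx using fun n => exists_continuous_forall_mem_of_isClopen (hD n) (hcov n)
  obtain ⟨g, hg⟩ := h (fun x n => φ n x) (continuous_pi hφ)
  choose! W hW𝒰 hCW using fun n m (hP : P n m) => hP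
  refine ⟨fun n => W n '' {m | m ≤ g n ∧ P n m}, fun n => ⟨?_, ?_⟩, fun x => ?_⟩
  · rintro _ ⟨m, ⟨-, hP⟩, rfl⟩
    exact hW𝒰 n m hP
  · exact ((finite_Iic (g n)).subset fun m hm => hm.1).image _
  · filter_upwards [hg x] with n hn
    exact ⟨_, mem_image_of_mem _ ⟨hn, (hφx n x).2⟩, hCW n _ (hφx n x).2 (hφx n x).1⟩

end Hurewicz

theorem exists_isClopen_seq_isTopologicalBasis_subtype {Y : Type*} [TopologicalSpace Y]
    [Countable (Clopens Y)] (hY : IsTopologicalBasis {s : Set Y | IsClopen s}) (X : Set Y) :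
    ∃ C : ℕ → Set X, (∀ m, IsClopen (C m)) ∧ IsTopologicalBasis (range C) := by
  obtain ⟨e, he⟩ := exists_surjective_nat (Clopens Y)
  refine ⟨fun m => (↑) ⁻¹' (e m : Set Y), fun m => (e m).isClopen.preimage continuous_subtype_val,
    ?_⟩
  convert isTopologicalBasis_subtype hY (· ∈ X)
  ext s
  constructor
  · rintro ⟨m, rfl⟩
    exact ⟨e m, (e m).isClopen, rfl⟩
  · rintro ⟨t, ht, rfl⟩
    obtain ⟨m, hm⟩ := he ⟨t, ht⟩
    exact ⟨m, by simp [hm]⟩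

/-- A subset `X` of the Cantor space is Hurewicz iff every continuous image of
`X` in the Baire space is bounded. -/
theorem stmt9 (X : Set CantorSp) :
    Hurewicz ↥X ↔
      ∀ Φ : ↥X → (ℕ → ℕ), Continuous Φ → ∃ g : ℕ → ℕ, ∀ x : ↥X, LeStar (Φ x) g := by
  have : Countable (Clopens CantorSp) := Clopens.countable_iff_secondCountable.mpr inferInstance
  obtain ⟨C, hC, hB⟩ :=
    exists_isClopen_seq_isTopologicalBasis_subtype isTopologicalBasis_isClopen X
  exact ⟨fun hX _ hΦ => hX.exists_forall_leStar hΦ, hurewicz_of_forall_exists_leStar hC hB⟩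
end OmissionOfIntervals
end

section
/- Let κ be an uncountable cardinal and S ⊆ [ℕ]^∞. Then S is κ-unbounded if and only if S is κ-concentrated on Fin. -/
open Set Filter Cardinal

namespace OmissionOfIntervals

/-! The sets `boundedBy b` (all `x` with `enum x ≤ b`) are closed and avoid `Fin`, and by
compactness of the Cantor space every closed set avoiding `Fin` lies inside one of them. So the
complements of the `boundedBy b` are cofinal among the open neighbourhoods of `Fin`, and both
properties say that `S` meets each `boundedBy b` in fewer than `κ` points. -/

theorem continuous_count_true (m : ℕ) :
    Continuous fun x : ℕ → Bool => Nat.count (fun k => x k = true) m := by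
  induction m with
  | zero => simpa using continuous_const
  | succ m ih =>
    simp only [Nat.count_succ]
    exact ih.add <|
      (continuous_of_discreteTopology (f := fun b : Bool => if b = true then 1 else 0)).comp
        (continuous_apply m)

/-- The set of `x` with `enum x ≤ b`, phrased by counting so that it is visibly closed and,
unlike `enum` (junk on finite sets), excludes every finite set. -/
def boundedBy (b : ℕ → ℕ) : Set CantorSp :=
  {x | ∀ n, n < Nat.count (fun k => x k = true) (b n + 1)}

theorem isClosed_boundedBy (b : ℕ → ℕ) : IsClosed (boundedBy b) := by
  simp only [boundedBy, Set.ofPred_forall]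
  exact isClosed_iInter fun n =>
    (isClopen_discrete {c | n < c}).isClosed.preimage (continuous_count_true (b n + 1))

theorem boundedBy_subset_cInf (b : ℕ → ℕ) : boundedBy b ⊆ CInf := by
  intro x hx hfin
  have hcount := Nat.count_le_card hfin (b hfin.toFinset.card + 1)
  exact (hx hfin.toFinset.card).not_ge hcount

theorem mem_boundedBy_iff {x : CantorSp} (hx : x ∈ CInf) (b : ℕ → ℕ) :
    x ∈ boundedBy b ↔ ∀ n, enum x n ≤ b n :=
  forall_congr' fun _ => (Nat.lt_nth_iff_count_lt hx).trans Nat.lt_succ_iff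

theorem exists_subset_boundedBy_of_isCompact {K : Set CantorSp} (hK : IsCompact K)
    (hKinf : K ⊆ CInf) : ∃ b, K ⊆ boundedBy b := by
  have hcover (n : ℕ) : ∃ m, K ⊆ {x | n < Nat.count (fun k => x k = true) (m + 1)} := by
    refine hK.elim_directed_cover _
      (fun m => (isClopen_discrete {c | n < c}).isOpen.preimage (continuous_count_true (m + 1)))
      (fun x hx => Set.mem_iUnion.mpr ⟨enum x n, ?_⟩) (Monotone.directed_le fun m m' h x hx => ?_)
    · exact (Nat.lt_nth_iff_count_lt (hKinf hx)).mpr (Nat.lt_succ_self _)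
    · exact hx.trans_le (Nat.count_monotone _ (Nat.succ_le_succ h))
  choose b hb using hcover
  exact ⟨b, fun x hx n => hb n hx⟩

theorem sep_enum_le_eq_inter_boundedBy {S : Set CantorSp} (hS : S ⊆ CInf) (b : ℕ → ℕ) :
    {s ∈ S | ∀ n, enum s n ≤ b n} = S ∩ boundedBy b :=
  Set.sep_ext_iff.mpr fun _ hs => (mem_boundedBy_iff (hS hs) b).symm

theorem stmt10_general (κ : Cardinal) (S : Set CantorSp)
    (hS : S ⊆ CInf) :
    KappaUnbounded κ S ↔ KappaConcentrated κ S := by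
  refine and_congr_right' ⟨fun hbdd U hU hFin => ?_, fun hconc b => ?_⟩
  · obtain ⟨b, hb⟩ := exists_subset_boundedBy_of_isCompact hU.isClosed_compl.isCompact
      fun x hx hfin => hx (hFin hfin)
    refine (Cardinal.mk_le_mk_of_subset ?_).trans_lt (hbdd b)
    rw [sep_enum_le_eq_inter_boundedBy hS]
    exact Set.inter_subset_inter_right S hb
  · rw [sep_enum_le_eq_inter_boundedBy hS, ← Set.sdiff_compl]
    exact hconc _ (isClosed_boundedBy b).isOpen_compl
      fun x hfin hx => boundedBy_subset_cInf b hx hfin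

/-- For an uncountable cardinal `κ` and `S ⊆ [ℕ]^∞`, the set `S` is
`κ`-unbounded iff it is `κ`-concentrated on `Fin`. -/
theorem stmt10 (κ : Cardinal) (hκ : Cardinal.aleph0 < κ) (S : Set CantorSp)
    (hS : S ⊆ CInf) :
    KappaUnbounded κ S ↔ KappaConcentrated κ S :=
  stmt10_general κ S hS
end OmissionOfIntervals
end

section
/- Let κ be a cardinal with ℵ₁ ≤ κ ≤ 𝔠 (the cardinality of the continuum). If a set X ⊆ 𝒫(ℕ) is κ-concentrated on Fin, then the subspace X of the Cantor space is not σ-compact (not a countable union of compact subsets). -/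
/-!
A σ-compact uncountable set `X` contains an uncountable compact set `K`, and `K`, being closed
in a Polish space, contains a copy of the Cantor space. Since `Fin` is countable, this copy can
be shrunk to a compact set `C ⊆ X` of size `𝔠` that misses `Fin`. Then `Cᶜ` is an open
neighbourhood of `Fin` with `|X ∖ Cᶜ| ≥ |C| = 𝔠 ≥ κ`, contradicting κ-concentration.
-/

open Set Filter Cardinal

namespace OmissionOfIntervals

instance : PolishSpace CantorSp := {}

lemma countable_cFin : CFin.Countable := by
  refine (countable_range fun s : Finset ℕ => fun n => decide (n ∈ s)).mono fun x hx => ?_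
  exact ⟨(show {n | x n = true}.Finite from hx).toFinset, funext fun n => by simp⟩

theorem exists_continuous_injective_forall_ne (e : ℕ → ℕ → Bool) :
    ∃ h : (ℕ → Bool) → ℕ → Bool, Continuous h ∧ Function.Injective h ∧ ∀ y n, h y ≠ e n := by
  refine ⟨fun y m => if m % 2 = 0 then y (m / 2) else !e (m / 2) m, ?_, ?_, ?_⟩
  · refine continuous_pi fun m => ?_
    split_ifs
    · exact continuous_apply _
    · exact continuous_const
  · intro y z hyz
    funext n
    simpa using congrFun hyz (2 * n)
  · intro y n hne
    have hodd := congrFun hne (2 * n + 1)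
    simp [show (2 * n + 1) / 2 = n by omega] at hodd

theorem exists_continuous_injective_disjoint_range {A : Set (ℕ → Bool)} (hA : A.Countable) :
    ∃ h : (ℕ → Bool) → ℕ → Bool, Continuous h ∧ Function.Injective h ∧ Disjoint (range h) A := by
  obtain ⟨e, hAe⟩ := countable_iff_exists_subset_range.mp hA
  obtain ⟨h, hc, hi, hne⟩ := exists_continuous_injective_forall_ne e
  refine ⟨h, hc, hi, disjoint_left.mpr ?_⟩
  rintro _ ⟨y, rfl⟩ hyA
  obtain ⟨n, hn⟩ := hAe hyA
  exact hne y n hn.symm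

theorem _root_.IsClosed.exists_isCompact_subset_disjoint_mk_eq_continuum {α : Type*}
    [TopologicalSpace α] [PolishSpace α] {K A : Set α} (hK : IsClosed K) (hKunc : ¬K.Countable)
    (hA : A.Countable) :
    ∃ C ⊆ K, IsCompact C ∧ Disjoint C A ∧ #C = 𝔠 := by
  obtain ⟨f, hfK, hfc, hfi⟩ := hK.exists_nat_bool_injection_of_not_countable hKunc
  obtain ⟨h, hc, hi, hdisj⟩ := exists_continuous_injective_disjoint_range (hA.preimage hfi)
  refine ⟨range (f ∘ h), (range_comp_subset_range h f).trans hfK, isCompact_range (hfc.comp hc),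
    ?_, ?_⟩
  · refine disjoint_left.mpr ?_
    rintro _ ⟨y, rfl⟩ hyA
    exact disjoint_left.mp hdisj (mem_range_self y) hyA
  · have := mk_range_eq_of_injective (hfi.comp hi)
    rw [mk_arrow, mk_nat, mk_bool, lift_id, lift_id, two_power_aleph0, lift_continuum] at this
    rwa [← lift_continuum.{0, _}, lift_inj] at this

theorem _root_.IsSigmaCompact.exists_isCompact_subset_not_countable {α : Type*}
    [TopologicalSpace α] {s : Set α} (hs : IsSigmaCompact s) (hunc : ¬s.Countable) :
    ∃ K ⊆ s, IsCompact K ∧ ¬K.Countable := by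
  obtain ⟨K, hK, rfl⟩ := hs
  by_contra! hcount
  exact hunc (countable_iUnion fun n => hcount (K n) (subset_iUnion K n) (hK n))

variable {κ : Cardinal} {X : Set CantorSp}

theorem KappaConcentrated.not_countable (hX : KappaConcentrated κ X) (hκ : ℵ₁ ≤ κ) :
    ¬X.Countable := fun hcount =>
  (hκ.trans hX.1 |>.trans hcount.le_aleph0).not_gt aleph0_lt_aleph_one

theorem KappaConcentrated.mk_lt_of_isCompact (hX : KappaConcentrated κ X) {C : Set CantorSp}
    (hC : IsCompact C) (hCX : C ⊆ X) (hCF : Disjoint C CFin) : #C < κ :=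
  (mk_le_mk_of_subset (show C ⊆ X \ Cᶜ from fun _ hx => ⟨hCX hx, not_not_intro hx⟩)).trans_lt
    (hX.2 Cᶜ hC.isClosed.isOpen_compl (subset_compl_comm.mp hCF.subset_compl_right))

/-- If `ℵ₁ ≤ κ ≤ 𝔠` and `X ⊆ 𝒫(ℕ)` is `κ`-concentrated on `Fin`, then the
subspace `X` of the Cantor space is not σ-compact. -/
theorem stmt11 (κ : Cardinal) (h1 : Cardinal.aleph 1 ≤ κ) (h2 : κ ≤ Cardinal.continuum)
    (X : Set CantorSp) (hX : KappaConcentrated κ X) :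
    ¬ SigmaCompactSpace ↥X := by
  intro hσ
  obtain ⟨K, hKX, hK, hKunc⟩ := (isSigmaCompact_iff_sigmaCompactSpace.mpr hσ)
    |>.exists_isCompact_subset_not_countable (hX.not_countable h1)
  obtain ⟨C, hCK, hC, hCF, hCcard⟩ :=
    hK.isClosed.exists_isCompact_subset_disjoint_mk_eq_continuum hKunc countable_cFin
  exact (h2.trans hCcard.ge).not_gt (hX.mk_lt_of_isCompact hC (hCK.trans hKX) hCF)
end OmissionOfIntervals
end

section
/- No Hausdorff topological space satisfying S1(Γ,O) contains a subspace homeomorphic to the Cantor space 2^ℕ. In particular, the Cantor space 2^ℕ does not satisfy S1(Γ,O). -/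
open Set Filter Cardinal

namespace OmissionOfIntervals

/-!
A countable product `∏ₙ Yₙ` of infinite T₁ spaces fails `S1(Γ,O)`: for each `n` the sets
`{x | xₙ ≠ y}`, `y ∈ Yₙ`, form a γ-cover (a point misses at most one of them), and any selection
`{x | xₙ ≠ yₙ}` misses the point `(yₙ)ₙ`. The Cantor space maps continuously onto its countable
power, and `S1(Γ,O)` passes to continuous images and to closed subspaces; a copy of the Cantor
space in a Hausdorff space is compact, hence closed.
-/

section Preservation

variable {X Y : Type*} [TopologicalSpace X] [TopologicalSpace Y]

theorem PointCofiniteCover.preimage {𝒰 : Set (Set Y)} (h𝒰 : PointCofiniteCover 𝒰) {f : X → Y}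
    (hf : Continuous f) (hs : Function.Surjective f) : PointCofiniteCover ((f ⁻¹' ·) '' 𝒰) := by
  obtain ⟨hopen, hinf, hcofin⟩ := h𝒰
  refine ⟨?_, hinf.image (Set.preimage_injective.2 hs).injOn, fun x => ?_⟩
  · rintro _ ⟨U, hU, rfl⟩
    exact (hopen U hU).preimage hf
  · refine ((hcofin (f x)).image (f ⁻¹' ·)).subset ?_
    rintro _ ⟨⟨U, hU, rfl⟩, hx⟩
    exact ⟨U, ⟨hU, hx⟩, rfl⟩

theorem S1GammaO.of_surjective (h : S1GammaO X) {f : X → Y} (hf : Continuous f)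
    (hs : Function.Surjective f) : S1GammaO Y := by
  intro 𝒰 h𝒰
  obtain ⟨V, hV, hcov⟩ := h _ fun n => (h𝒰 n).preimage hf hs
  choose U hU hUV using hV
  refine ⟨U, hU, eq_univ_of_forall fun y => ?_⟩
  obtain ⟨x, rfl⟩ := hs y
  obtain ⟨n, hn⟩ := mem_iUnion.1 (hcov ▸ mem_univ x : x ∈ ⋃ n, V n)
  exact mem_iUnion.2 ⟨n, by rwa [← hUV n] at hn⟩

/-- The largest open subset of `X` whose trace on `Y` lies in `V`. -/
def openExtension (Y : Set X) (V : Set Y) : Set X := interior (Subtype.val '' V ∪ Yᶜ)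

theorem compl_subset_openExtension {Y : Set X} (hY : IsClosed Y) (V : Set Y) :
    Yᶜ ⊆ openExtension Y V :=
  interior_maximal subset_union_right hY.isOpen_compl

theorem preimage_val_openExtension {Y : Set X} {V : Set Y} (hV : IsOpen V) :
    Subtype.val ⁻¹' openExtension Y V = V := by
  refine Subset.antisymm (fun y hy => ?_) fun y hy => ?_
  · obtain ⟨z, hz, hzy⟩ | hy' := interior_subset hy
    · rwa [← Subtype.val_injective hzy]
    · exact absurd y.2 hy'
  · obtain ⟨W, hW, rfl⟩ := isOpen_induced_iff.1 hV
    refine interior_maximal (fun x hx => ?_) hW hy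
    by_cases hxY : x ∈ Y
    · exact Or.inl ⟨⟨x, hxY⟩, hx, rfl⟩
    · exact Or.inr hxY

theorem PointCofiniteCover.image_openExtension {Y : Set X} (hY : IsClosed Y)
    {𝒱 : Set (Set Y)} (h𝒱 : PointCofiniteCover 𝒱) :
    PointCofiniteCover (openExtension Y '' 𝒱) := by
  obtain ⟨hopen, hinf, hcofin⟩ := h𝒱
  have htrace : ∀ V ∈ 𝒱, Subtype.val ⁻¹' openExtension Y V = V := fun V hV =>
    preimage_val_openExtension (hopen V hV)
  refine ⟨?_, hinf.image fun V hV V' hV' h => ?_, fun x => ?_⟩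
  · rintro _ ⟨V, -, rfl⟩
    exact isOpen_interior
  · rw [← htrace V hV, ← htrace V' hV', h]
  · by_cases hx : x ∈ Y
    · refine ((hcofin ⟨x, hx⟩).image (openExtension Y)).subset ?_
      rintro _ ⟨⟨V, hV, rfl⟩, hxV⟩
      refine ⟨V, ⟨hV, fun hxV' => hxV ?_⟩, rfl⟩
      rw [← htrace V hV] at hxV'
      exact hxV'
    · refine Set.finite_empty.subset ?_
      rintro _ ⟨⟨V, -, rfl⟩, hxV⟩
      exact hxV (compl_subset_openExtension hY V hx)

theorem S1GammaO.subtype_of_isClosed (h : S1GammaO X) {Y : Set X} (hY : IsClosed Y) :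
    S1GammaO Y := by
  intro 𝒱 h𝒱
  obtain ⟨U, hU, hcov⟩ := h _ fun n => (h𝒱 n).image_openExtension hY
  choose V hV hVU using hU
  refine ⟨V, hV, eq_univ_of_forall fun y => ?_⟩
  obtain ⟨n, hn⟩ := mem_iUnion.1 (hcov ▸ mem_univ y.1 : y.1 ∈ ⋃ n, U n)
  rw [← hVU n] at hn
  exact mem_iUnion.2 ⟨n, by rwa [← preimage_val_openExtension ((h𝒱 n).1 _ (hV n))]⟩

end Preservation

theorem not_s1GammaO_pi_nat (Y : ℕ → Type*) [∀ n, TopologicalSpace (Y n)]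
    [∀ n, T1Space (Y n)] [∀ n, Infinite (Y n)] : ¬ S1GammaO (∀ n, Y n) := by
  intro h
  let avoid (n : ℕ) (y : Y n) : Set (∀ n, Y n) := {x | x n ≠ y}
  have hcover (n : ℕ) : PointCofiniteCover (range (avoid n)) := by
    refine ⟨?_, infinite_range_of_injective fun y y' hyy' => ?_, fun x => ?_⟩
    · rintro _ ⟨y, rfl⟩
      exact (isClosed_singleton.preimage (continuous_apply n)).isOpen_compl
    · by_contra hne
      have hmem : Function.update (fun m => Classical.arbitrary (Y m)) n y ∈ avoid n y' := by
        simpa [avoid] using hne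
      rw [← hyy'] at hmem
      simp [avoid] at hmem
    · refine (finite_singleton (avoid n (x n))).subset ?_
      rintro _ ⟨⟨y, rfl⟩, hx⟩
      rw [not_not.1 hx, mem_singleton_iff]
  obtain ⟨U, hU, hcov⟩ := h _ hcover
  choose y hy using hU
  obtain ⟨n, hn⟩ := mem_iUnion.1 (hcov ▸ mem_univ y : y ∈ ⋃ n, U n)
  rw [← hy n] at hn
  exact hn rfl

theorem not_s1GammaO_cantorSp : ¬ S1GammaO CantorSp := fun h =>
  not_s1GammaO_pi_nat (fun _ => CantorSp) <|
    h.of_surjective (f := fun x n k => x (Nat.pair n k))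
      (continuous_pi fun _ => continuous_pi fun _ => continuous_apply _)
      fun y => ⟨fun m => y m.unpair.1 m.unpair.2, by simp⟩

theorem not_nonempty_homeomorph_cantorSp_of_s1GammaO {X : Type*} [TopologicalSpace X]
    [T2Space X] (hX : S1GammaO X) (Y : Set X) : ¬ Nonempty (Y ≃ₜ CantorSp) := by
  rintro ⟨e⟩
  have hY : IsClosed Y := (isCompact_iff_compactSpace.2 e.symm.compactSpace).isClosed
  exact not_s1GammaO_cantorSp
    ((hX.subtype_of_isClosed hY).of_surjective e.continuous e.surjective)

/-- No Hausdorff space satisfying `S1(Γ,O)` contains a subspace homeomorphic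
to the Cantor space; in particular, the Cantor space does not satisfy `S1(Γ,O)`. -/
theorem stmt12 :
    (∀ (X : Type*) [TopologicalSpace X] [T2Space X], S1GammaO X →
      ∀ Y : Set X, ¬ Nonempty (↥Y ≃ₜ CantorSp)) ∧
    ¬ S1GammaO CantorSp :=
  ⟨fun _ _ _ hX => not_nonempty_homeomorph_cantorSp_of_s1GammaO hX, not_s1GammaO_cantorSp⟩
end OmissionOfIntervals
end

section
/- The minimal cardinality of a subset X of the Cantor space 𝒫(ℕ) that is not an ω-γ set equals 𝔭. That is: (i) there is a set X ⊆ 𝒫(ℕ) of cardinality 𝔭 which has an open ω-cover with no point-cofinite subcover; and (ii) every X ⊆ 𝒫(ℕ) with |X| < 𝔭 is an ω-γ set. -/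
open Set Filter Cardinal

namespace OmissionOfIntervals

/-! A countable ω-cover `U₀, U₁, …` of a space `X` is coded by the index sets `{n | F ⊆ Uₙ}`,
`F ⊆ X` finite. They form a centered family, and an infinite `A ⊆ ℕ` indexes a point-cofinite
subcover `{Uₙ | n ∈ A}` exactly when it is a pseudointersection of this family. In a
second-countable space every ω-cover has a countable ω-subcover, so a space of size `< 𝔭` has
fewer than `𝔭` such index sets, and hence is an ω-γ set.

Conversely, let `S` be a centered family of size `𝔭` without pseudointersection. The set `X` of
all `s ∖ [0, k)`, `s ∈ S`, is still centered, has no pseudointersection and has size `𝔭`. The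
clopen sets `{x ∈ X | n ∈ x}` form an ω-cover of `X` (none is all of `X`, as `s ∖ [0, n]` avoids
`n`), and a point-cofinite subcover would be indexed by a pseudointersection of `X`. -/

@[simp]
lemma boolIndicator_eq_true {s : Set ℕ} {n : ℕ} : s.boolIndicator n = true ↔ n ∈ s :=
  (s.mem_iff_boolIndicator n).symm

lemma boolIndicator_mem_CInf {s : Set ℕ} (hs : s.Infinite) : s.boolIndicator ∈ CInf := by
  simpa [CInf] using hs

lemma hasPseudointersection_iff {S : Set CantorSp} :
    HasPseudointersection S ↔ ∃ A : Set ℕ, A.Infinite ∧ ∀ s ∈ S, {n ∈ A | ¬ s n = true}.Finite :=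
  ⟨fun ⟨a, ha, h⟩ => ⟨{n | a n = true}, ha, h⟩,
    fun ⟨A, hA, h⟩ => ⟨A.boolIndicator, boolIndicator_mem_CInf hA, by simpa [SubStar] using h⟩⟩

lemma HasPseudointersection.mono {S T : Set CantorSp} (h : HasPseudointersection T)
    (hST : S ⊆ T) : HasPseudointersection S :=
  let ⟨a, ha, hsub⟩ := h
  ⟨a, ha, fun s hs => hsub s (hST hs)⟩

lemma Centered.hasPseudointersection_of_finite {S : Set CantorSp} (hc : Centered S)
    (hS : S.Finite) : HasPseudointersection S :=
  hasPseudointersection_iff.2 ⟨_, hc.2 hS.toFinset (by simp),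
    fun s hs => finite_empty.subset fun _ ⟨hn, hsn⟩ => hsn (hn s (hS.mem_toFinset.2 hs))⟩

lemma centered_range_boolIndicator {α : Type*} {A : Finset α → Set ℕ} (hA : Antitone A)
    (hinf : ∀ F, (A F).Infinite) : Centered (range fun F => (A F).boolIndicator) := by
  classical
  refine ⟨by rintro _ ⟨F, rfl⟩; exact boolIndicator_mem_CInf (hinf F), fun G hG => ?_⟩
  choose! f hf using fun x (hx : x ∈ G) => hG hx
  refine Infinite.mono (fun n hn x hx => ?_) (hinf (G.sup f))
  rw [← hf x hx]
  exact boolIndicator_eq_true.2 (hA (Finset.le_sup hx) hn)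

lemma centered_image_boolIndicator {l : Filter ℕ} [l.NeBot] (hl : l ≤ cofinite) :
    Centered (boolIndicator '' l.sets) := by
  have hinf : ∀ s ∈ l, s.Infinite := fun s hs hfin => compl_notMem hs (hl hfin.compl_mem_cofinite)
  have hev : ∀ x ∈ boolIndicator '' l.sets, ∀ᶠ n in l, x n = true := by
    rintro _ ⟨s, hs, rfl⟩
    simpa using hs
  exact ⟨fun x hx => hinf _ (hev x hx),
    fun F hF => hinf _ ((eventually_all_finset F).2 fun x hx => hev x (hF hx))⟩

lemma exists_infinite_inter_infinite_diff {α : Type*} {s : Set α} (hs : s.Infinite) :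
    ∃ t : Set α, (s ∩ t).Infinite ∧ (s \ t).Infinite := by
  obtain ⟨t, u, rfl, htu, hcard⟩ := hs.exists_union_disjoint_cardinal_eq_of_infinite
  have hiff : t.Infinite ↔ u.Infinite := by
    simp only [← Set.infinite_coe_iff, Cardinal.infinite_iff, hcard]
  have ht : t.Infinite := (infinite_union.1 hs).elim id hiff.2
  refine ⟨t, by rwa [union_inter_cancel_left], ?_⟩
  rw [union_sdiff_left, htu.symm.sdiff_eq_left]
  exact hiff.1 ht

lemma not_hasPseudointersection_image_boolIndicator_hyperfilter :
    ¬ HasPseudointersection (boolIndicator '' (hyperfilter ℕ : Filter ℕ).sets) := by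
  rintro ⟨a, ha, hsub⟩
  obtain ⟨t, hat, hat'⟩ := exists_infinite_inter_infinite_diff ha
  rcases (hyperfilter ℕ).mem_or_compl_mem t with ht | ht
  · exact hat' ((hsub _ ⟨t, ht, rfl⟩).subset fun n hn => ⟨hn.1, by simpa using hn.2⟩)
  · exact hat ((hsub _ ⟨tᶜ, ht, rfl⟩).subset fun n hn => ⟨hn.1, by simpa using hn.2⟩)

lemma frp_le_mk {S : Set CantorSp} (hc : Centered S) (hp : ¬ HasPseudointersection S) :
    frp ≤ #S :=
  csInf_le' ⟨S, hc, hp, rfl⟩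

lemma Centered.hasPseudointersection_of_mk_lt_frp {S : Set CantorSp} (hc : Centered S)
    (hS : #S < frp) : HasPseudointersection S :=
  by_contra fun hp => (frp_le_mk hc hp).not_gt hS

lemma exists_centered_mk_eq_frp :
    ∃ S : Set CantorSp, Centered S ∧ ¬ HasPseudointersection S ∧ #S = frp :=
  csInf_mem (s := {c | ∃ S : Set CantorSp, Centered S ∧ ¬ HasPseudointersection S ∧ #S = c})
    ⟨_, _, centered_image_boolIndicator hyperfilter_le_cofinite,
      not_hasPseudointersection_image_boolIndicator_hyperfilter, rfl⟩

lemma aleph0_le_frp : ℵ₀ ≤ frp := by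
  obtain ⟨S, hc, hp, hS⟩ := exists_centered_mk_eq_frp
  exact hS ▸ Cardinal.infinite_iff.1
    (Set.infinite_coe_iff.2 fun hfin => hp (hc.hasPseudointersection_of_finite hfin))

section Covers

variable {X : Type*} [TopologicalSpace X] {𝒰 : Set (Set X)}

lemma OmegaCover.of_subset {𝒱 : Set (Set X)} (h : OmegaCover 𝒰) (h𝒱 : 𝒱 ⊆ 𝒰)
    (hF : ∀ F : Finset X, ∃ V ∈ 𝒱, ↑F ⊆ V) : OmegaCover 𝒱 :=
  ⟨fun V hV => h.1 V (h𝒱 hV), fun V hV => h.2.1 V (h𝒱 hV), hF⟩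

lemma OmegaCover.infinite (h : OmegaCover 𝒰) : 𝒰.Infinite := by
  intro hfin
  have := hfin.to_subtype
  choose p hp using fun U : 𝒰 => (ne_univ_iff_exists_notMem (U : Set X)).1 (h.2.1 U U.2)
  obtain ⟨U, hU, hpU⟩ := h.2.2 (finite_range p).toFinset
  exact hp ⟨U, hU⟩ (hpU (by simp))

lemma OmegaCover.infinite_space (h : OmegaCover 𝒰) : Infinite X := by
  by_contra hX
  rw [not_infinite_iff_finite] at hX
  exact h.infinite (Set.toFinite 𝒰)

lemma OmegaCover.infinite_setOf_subset (h : OmegaCover 𝒰) (F : Finset X) :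
    {U ∈ 𝒰 | ↑F ⊆ U}.Infinite := by
  classical
  refine (h.of_subset (sep_subset _ _) fun G => ?_).infinite
  obtain ⟨U, hU, hFG⟩ := h.2.2 (F ∪ G)
  rw [Finset.coe_union, union_subset_iff] at hFG
  exact ⟨U, ⟨hU, hFG.1⟩, hFG.2⟩

/-- A finite set `F` lies in `U` iff an enumeration `Fin #F → X` of it lies in the box `U^#F`, so
it suffices to cover each power `Fin n → X` by countably many boxes (Lindelöf). -/
lemma OmegaCover.exists_countable_subset [SecondCountableTopology X] (h : OmegaCover 𝒰) :
    ∃ 𝒱 ⊆ 𝒰, 𝒱.Countable ∧ OmegaCover 𝒱 := by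
  have hLindelof : ∀ n : ℕ, ∃ T : Set 𝒰, T.Countable ∧
      ⋃ U ∈ T, pi univ (fun _ : Fin n => (U : Set X)) = ⋃ U : 𝒰, pi univ fun _ => (U : Set X) :=
    fun n => TopologicalSpace.isOpen_iUnion_countable _
      fun U => isOpen_set_pi finite_univ fun _ _ => h.1 U U.2
  choose T hTc hT using hLindelof
  have hsub : (⋃ n, Subtype.val '' T n) ⊆ 𝒰 :=
    iUnion_subset fun n => by rintro _ ⟨U, -, rfl⟩; exact U.2
  refine ⟨_, hsub, countable_iUnion fun n => (hTc n).image _, h.of_subset hsub fun F => ?_⟩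
  obtain ⟨U, hU, hFU⟩ := h.2.2 F
  have hmem : (fun i => (F.equivFin.symm i : X)) ∈ ⋃ U : 𝒰, pi univ fun _ => (U : Set X) :=
    mem_iUnion.2 ⟨⟨U, hU⟩, fun i _ => hFU (F.equivFin.symm i).2⟩
  rw [← hT] at hmem
  obtain ⟨W, hW, hFW⟩ := mem_iUnion₂.1 hmem
  refine ⟨W, mem_iUnion.2 ⟨_, W, hW, rfl⟩, fun x hx => ?_⟩
  simpa using hFW (F.equivFin ⟨x, hx⟩) trivial

lemma exists_infinite_of_pointCofiniteCover_subset_range {V : ℕ → Set X} {𝒱 : Set (Set X)}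
    (h𝒱 : PointCofiniteCover 𝒱) (hsub : 𝒱 ⊆ range V) :
    ∃ A : Set ℕ, A.Infinite ∧ ∀ x, {n ∈ A | x ∉ V n}.Finite := by
  choose g hg using fun W : 𝒱 => hsub W.2
  have hg_inj : Function.Injective g := fun W W' h => Subtype.ext ((hg W).symm.trans (h ▸ hg W'))
  have := h𝒱.2.1.to_subtype
  refine ⟨range g, infinite_range_of_injective hg_inj, fun x => ?_⟩
  refine (((h𝒱.2.2 x).preimage Subtype.val_injective.injOn).image g).subset ?_
  rintro _ ⟨⟨W, rfl⟩, hx⟩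
  exact ⟨W, ⟨W.2, hg W ▸ hx⟩, rfl⟩

lemma pointCofiniteCover_image {V : ℕ → Set X} (hV : Function.Injective V)
    (hopen : ∀ n, IsOpen (V n)) {A : Set ℕ} (hA : A.Infinite)
    (hfin : ∀ x, {n ∈ A | x ∉ V n}.Finite) : PointCofiniteCover (V '' A) := by
  refine ⟨by rintro _ ⟨n, -, rfl⟩; exact hopen n, hA.image hV.injOn, fun x => ?_⟩
  refine ((hfin x).image V).subset ?_
  rintro _ ⟨⟨n, hn, rfl⟩, hx⟩
  exact ⟨n, ⟨hn, hx⟩, rfl⟩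

end Covers

theorem omegaGammaSet_of_mk_lt_frp {X : Type} [TopologicalSpace X] [SecondCountableTopology X]
    (hX : #X < frp) : OmegaGammaSet X := by
  intro 𝒰 h𝒰
  have := h𝒰.infinite_space
  obtain ⟨𝒰₀, h𝒰₀, hcount, hω⟩ := h𝒰.exists_countable_subset
  have := hcount.to_subtype
  have := hω.infinite.to_subtype
  obtain ⟨e⟩ := nonempty_equiv_of_countable (α := 𝒰₀) (β := ℕ)
  set V : ℕ → Set X := fun n => e.symm n
  have hV𝒰 : ∀ n, V n ∈ 𝒰 := fun n => h𝒰₀ (e.symm n).2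
  have hinf : ∀ F : Finset X, {n | ↑F ⊆ V n}.Infinite := fun F hfin =>
    hω.infinite_setOf_subset F <| (hfin.image V).subset fun U ⟨hU, hFU⟩ =>
      ⟨e ⟨U, hU⟩, by simpa [V] using hFU, by simp [V]⟩
  have hcent := centered_range_boolIndicator (A := fun F : Finset X => {n | ↑F ⊆ V n})
    (fun _ _ hFG _ hn => (Finset.coe_subset.2 hFG).trans hn) hinf
  have hcard : #(range fun F : Finset X => {n | ↑F ⊆ V n}.boolIndicator) < frp :=
    mk_range_le.trans_lt ((mk_finset_of_infinite X).trans_lt hX)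
  obtain ⟨A, hA, hfin⟩ :=
    hasPseudointersection_iff.1 (hcent.hasPseudointersection_of_mk_lt_frp hcard)
  refine ⟨V '' A, image_subset_iff.2 fun n _ => hV𝒰 n, pointCofiniteCover_image
    (Subtype.val_injective.comp e.symm.injective) (fun n => h𝒰.1 _ (hV𝒰 n)) hA fun x => ?_⟩
  simpa using hfin _ ⟨{x}, rfl⟩

lemma not_omegaGammaSet_of_centered {X : Set CantorSp} (hc : Centered X)
    (hp : ¬ HasPseudointersection X) (hzero : ∀ n, ∃ x ∈ X, x n = false) :
    ¬ OmegaGammaSet X := by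
  intro hγ
  set V : ℕ → Set X := fun n => {x | (x : CantorSp) n = true}
  have hω : OmegaCover (range V) := by
    refine ⟨?_, ?_, fun F => ?_⟩
    · rintro _ ⟨n, rfl⟩
      have hcont : Continuous fun x : X => (x : CantorSp) n :=
        (continuous_apply n).comp continuous_subtype_val
      exact hcont.isOpen_preimage {true} (isOpen_discrete _)
    · rintro _ ⟨n, rfl⟩ hV
      obtain ⟨x, hx, hxn⟩ := hzero n
      have hxV : (⟨x, hx⟩ : X) ∈ V n := hV ▸ mem_univ _
      simp [V, hxn] at hxV
    · obtain ⟨n, hn⟩ := (hc.2 (F.map (Function.Embedding.subtype _)) (by simp)).nonempty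
      exact ⟨V n, mem_range_self n, fun x hx => hn x (by simpa using hx)⟩
  obtain ⟨𝒱, hsub, h𝒱⟩ := hγ _ hω
  obtain ⟨A, hA, hfin⟩ := exists_infinite_of_pointCofiniteCover_subset_range h𝒱 hsub
  exact hp (hasPseudointersection_iff.2 ⟨A, hA, fun s hs => hfin ⟨s, hs⟩⟩)

def dropBelow (k : ℕ) (x : CantorSp) : CantorSp := fun n => decide (k ≤ n) && x n

@[simp]
lemma dropBelow_apply_eq_true {k n : ℕ} {x : CantorSp} :
    dropBelow k x n = true ↔ k ≤ n ∧ x n = true := by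
  simp [dropBelow]

lemma dropBelow_zero (x : CantorSp) : dropBelow 0 x = x := by
  funext n
  simp [dropBelow]

lemma Centered.image2_dropBelow {S : Set CantorSp} (hc : Centered S) :
    Centered (image2 dropBelow univ S) := by
  classical
  refine ⟨?_, fun F hF => ?_⟩
  · rintro _ ⟨k, -, s, hs, rfl⟩
    refine Infinite.mono ?_ ((hc.1 hs).sdiff (finite_Iio k))
    rintro n ⟨hn, hnk⟩
    exact dropBelow_apply_eq_true.2 ⟨not_lt.1 hnk, hn⟩
  choose! k s hs hks using fun x (hx : x ∈ F) => by simpa using hF hx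
  have hFS : ↑(F.image s) ⊆ S := by
    rw [Finset.coe_image]
    exact image_subset_iff.2 hs
  refine Infinite.mono ?_ ((hc.2 _ hFS).sdiff (finite_Iio (F.sup k)))
  rintro n ⟨hn, hnk⟩ x hx
  rw [← hks x hx]
  exact dropBelow_apply_eq_true.2
    ⟨(Finset.le_sup hx).trans (not_lt.1 hnk), hn _ (Finset.mem_image_of_mem s hx)⟩

lemma exists_not_omegaGammaSet_mk_eq_frp : ∃ X : Set CantorSp, #X = frp ∧ ¬ OmegaGammaSet X := by
  obtain ⟨S, hc, hp, hS⟩ := exists_centered_mk_eq_frp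
  obtain ⟨s, hs⟩ : S.Nonempty :=
    nonempty_iff_ne_empty.2 fun h => hp (hc.hasPseudointersection_of_finite (h ▸ finite_empty))
  have hXp : ¬ HasPseudointersection (image2 dropBelow univ S) := fun h =>
    hp (h.mono fun s hs => ⟨0, trivial, s, hs, dropBelow_zero s⟩)
  refine ⟨_, le_antisymm ?_ (frp_le_mk hc.image2_dropBelow hXp),
    not_omegaGammaSet_of_centered hc.image2_dropBelow hXp fun n =>
      ⟨dropBelow (n + 1) s, mem_image2_of_mem trivial hs, by simp [dropBelow]⟩⟩
  calc #(image2 dropBelow univ S) ≤ #(univ : Set ℕ) * #S := mk_image2_le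
    _ = frp := by rw [mk_univ, mk_nat, hS, aleph0_mul_eq aleph0_le_frp]

/-- The minimal cardinality of a subset of the Cantor space that is not an
ω-γ set equals `𝔭`. -/
theorem stmt13 :
    (∃ X : Set CantorSp, #X = frp ∧ ¬ OmegaGammaSet ↥X) ∧
    (∀ X : Set CantorSp, #X < frp → OmegaGammaSet ↥X) :=
  ⟨exists_not_omegaGammaSet_mk_eq_frp, fun _ hX => omegaGammaSet_of_mk_lt_frp hX⟩
end OmissionOfIntervals
end

section
/- Let X be an infinite Hausdorff topological space. Then X is an ω-γ set (every open ω-cover of X has a point-cofinite subcover) if and only if X satisfies S1(Ω,Γ): for every sequence (U_n) of open ω-covers of X one can choose U_n ∈ U_n such that every point of X belongs to U_n for all but finitely many n. -/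
open Set Filter Cardinal

namespace OmissionOfIntervals

/-!
If `S1(Ω,Γ)` holds, apply it to the constant sequence of a single ω-cover: the selected sets
form a point-cofinite subcover, which is infinite because no member is all of `X`.

Conversely, fix distinct points `a 0, a 1, …` and ω-covers `𝒰 0, 𝒰 1, …`. The open sets `V`
that omit some `a m` and refine each of `𝒰 0, …, 𝒰 m` form an ω-cover. A point-cofinite
subcover contains, for each `n`, a member `V n` containing `a 0, …, a (n - 1)`, so the point
it omits has index `m ≥ n` and `V n` lies inside some member of `𝒰 n`. Each `x` lies in
`V n` for large `n`: only finitely many members of the subcover miss `x`, and each of them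
omits some `a j`, so it can only be `V n` for `n ≤ j`.
-/

section

variable {X : Type*} [TopologicalSpace X]

theorem pointCofiniteCover_range {U : ℕ → Set X} (hU : ∀ n, IsOpen (U n))
    (hne : ∀ n, U n ≠ Set.univ) (hev : ∀ x, ∀ᶠ n in atTop, x ∈ U n) :
    PointCofiniteCover (range U) := by
  have hcof : ∀ x, {n | x ∉ U n}.Finite := fun x => by
    simpa [← Nat.cofinite_eq_atTop, eventually_cofinite] using hev x
  refine ⟨forall_mem_range.2 hU, fun hfin => ?_, fun x => ((hcof x).image U).subset ?_⟩
  · have hout : ∀ V ∈ range U, ∃ x, x ∉ V := by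
      rintro _ ⟨n, rfl⟩
      exact (ne_univ_iff_exists_notMem _).1 (hne n)
    have : Nonempty X := let ⟨x, _⟩ := hout _ (mem_range_self 0); ⟨x⟩
    choose! p hp using hout
    obtain ⟨n, hn⟩ := ((hfin.eventually_all).2 fun V _ => hev (p V)).exists
    exact hp (U n) ⟨n, rfl⟩ (hn (U n) ⟨n, rfl⟩)
  · rintro _ ⟨⟨n, rfl⟩, hx⟩
    exact ⟨n, hx, rfl⟩

theorem S1OmegaGamma.omegaGammaSet (h : S1OmegaGamma X) : OmegaGammaSet X := by
  intro 𝒰 h𝒰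
  obtain ⟨U, hU, hev⟩ := h (fun _ => 𝒰) fun _ => h𝒰
  exact ⟨range U, range_subset_iff.2 hU,
    pointCofiniteCover_range (fun n => h𝒰.1 _ (hU n)) (fun n => h𝒰.2.1 _ (hU n)) hev⟩

theorem PointCofiniteCover.exists_seq_eventually_mem {𝒱 : Set (Set X)}
    (h𝒱 : PointCofiniteCover 𝒱) (a : ℕ → X) (homit : ∀ V ∈ 𝒱, ∃ m, a m ∉ V) :
    ∃ V : ℕ → Set X, (∀ n, V n ∈ 𝒱 ∧ ∀ j < n, a j ∈ V n) ∧
      ∀ x, ∀ᶠ n in atTop, x ∈ V n := by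
  have hgood : ∀ n, ∃ V ∈ 𝒱, ∀ j < n, a j ∈ V := fun n => by
    have hbad : {V ∈ 𝒱 | ∃ j < n, a j ∉ V}.Finite :=
      ((finite_Iio n).biUnion fun j _ => h𝒱.2.2 (a j)).subset
        fun V ⟨hV, j, hj, haj⟩ => mem_biUnion hj ⟨hV, haj⟩
    obtain ⟨V, hV, hVbad⟩ := (h𝒱.2.1.sdiff hbad).nonempty
    exact ⟨V, hV, fun j hj => by_contra fun haj => hVbad ⟨hV, j, hj, haj⟩⟩
  choose V hV hVa using hgood
  refine ⟨V, fun n => ⟨hV n, hVa n⟩, fun x => ?_⟩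
  choose! m hm using homit
  obtain ⟨M, hM⟩ := ((h𝒱.2.2 x).image m).bddAbove
  filter_upwards [eventually_gt_atTop M] with n hn
  by_contra hx
  have hmM : m (V n) ≤ M := hM ⟨V n, ⟨hV n, hx⟩, rfl⟩
  exact hm _ (hV n) (hVa n _ (hmM.trans_lt hn))

def diagonalCover (𝒰 : ℕ → Set (Set X)) (a : ℕ → X) : Set (Set X) :=
  {V | IsOpen V ∧ ∃ m, a m ∉ V ∧ ∀ i ≤ m, ∃ U ∈ 𝒰 i, V ⊆ U}

theorem omegaCover_diagonalCover [T1Space X] {𝒰 : ℕ → Set (Set X)}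
    (h𝒰 : ∀ n, OmegaCover (𝒰 n)) {a : ℕ → X} (ha : Function.Injective a) :
    OmegaCover (diagonalCover 𝒰 a) := by
  refine ⟨fun V hV => hV.1, ?_, fun F => ?_⟩
  · rintro V ⟨-, m, ham, -⟩ rfl
    exact ham (mem_univ _)
  · obtain ⟨_, ⟨m, rfl⟩, hamF⟩ := (infinite_range_of_injective ha).exists_notMem_finset F
    choose W hW hFW using fun i => (h𝒰 i).2.2 F
    refine ⟨(⋂ i ∈ Iic m, W i) \ {a m}, ⟨?_, m, fun h => h.2 rfl, fun i hi => ?_⟩, ?_⟩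
    · exact ((finite_Iic m).isOpen_biInter fun i _ => (h𝒰 i).1 _ (hW i)).sdiff isClosed_singleton
    · exact ⟨W i, hW i, sdiff_subset.trans (biInter_subset_of_mem hi)⟩
    · exact subset_sdiff_singleton (subset_iInter₂ fun i _ => hFW i) hamF

theorem OmegaGammaSet.s1OmegaGamma [T1Space X] [Infinite X] (h : OmegaGammaSet X) :
    S1OmegaGamma X := by
  intro 𝒰 h𝒰
  have ha := (Infinite.natEmbedding X).injective
  obtain ⟨𝒱, h𝒱sub, h𝒱⟩ := h _ (omegaCover_diagonalCover h𝒰 ha)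
  obtain ⟨V, hV, hev⟩ := h𝒱.exists_seq_eventually_mem (Infinite.natEmbedding X) fun V hV =>
    let ⟨_, m, ham, _⟩ := h𝒱sub hV
    ⟨m, ham⟩
  have hrefine : ∀ n, ∃ U ∈ 𝒰 n, V n ⊆ U := fun n => by
    obtain ⟨-, m, ham, hU⟩ := h𝒱sub (hV n).1
    exact hU n (not_lt.1 fun hlt => ham ((hV n).2 m hlt))
  choose U hU hVU using hrefine
  exact ⟨U, hU, fun x => (hev x).mono fun n hx => hVU n hx⟩

end

/-- An infinite Hausdorff space is an ω-γ set iff it satisfies `S1(Ω,Γ)`. -/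
theorem stmt14 (X : Type*) [TopologicalSpace X] [T2Space X] [Infinite X] :
    OmegaGammaSet X ↔ S1OmegaGamma X :=
  ⟨OmegaGammaSet.s1OmegaGamma, S1OmegaGamma.omegaGammaSet⟩
end OmissionOfIntervals
end

section
/- Let X ⊆ 𝒫(ℕ) with Fin ⊆ X, and let U be a family of open subsets of the Cantor space 𝒫(ℕ) that is an ω-cover of X. Then there exist a strictly increasing function a : ℕ → ℕ with a(1) = 1 and pairwise distinct sets U_1, U_2, … ∈ U such that for each n, every point x ∈ 𝒫(ℕ) with x ∩ (a(n), a(n+1)) = ∅ (x contains no integer strictly between a(n) and a(n+1)) belongs to U_n. -/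
open Set Filter Cardinal

namespace OmissionOfIntervals

/-!
The points omitting `(m, ∞)` code finite sets, so there are finitely many of them and they lie
in `X`; hence some `U ∈ 𝒰` contains all of them together with any prescribed finite `G ⊆ X`,
and by compactness of the Cantor space `U` then contains every point omitting some finite
interval `(m, N)`. Iterating from `m = 1`, with `G` made of points of `X` missed by the
previously chosen members, yields the intervals and pairwise distinct `Uₙ`.
-/

def omitting (s : Set ℕ) : Set CantorSp := {x | ∀ k ∈ s, x k = false}

lemma omitting_antitone : Antitone omitting :=
  fun _ _ hst _ hx k hk => hx k (hst hk)

lemma isClosed_omitting (s : Set ℕ) : IsClosed (omitting s) := by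
  simp only [omitting, Set.ofPred_forall]
  exact isClosed_iInter fun k => isClosed_iInter fun _ =>
    isClosed_eq (continuous_apply k) continuous_const

lemma omitting_finite {s : Set ℕ} (hs : sᶜ.Finite) : (omitting s).Finite := by
  have := hs.to_subtype
  refine Set.Finite.of_finite_image (f := fun x (k : ↥sᶜ) => x k) (Set.toFinite _) ?_
  intro x hx y hy hxy
  funext k
  by_cases hk : k ∈ s
  · rw [hx k hk, hy k hk]
  · exact congrFun hxy ⟨k, hk⟩

lemma omitting_subset_CFin {s : Set ℕ} (hs : sᶜ.Finite) : omitting s ⊆ CFin :=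
  fun x hx => hs.subset fun k hxk hks => by simp [hx k hks] at hxk

lemma IsOpen.exists_omitting_Ioo_subset {U : Set CantorSp} (hU : IsOpen U) {m : ℕ}
    (hmU : omitting (Ioi m) ⊆ U) : ∃ N, omitting (Ioo m N) ⊆ U := by
  have hdir : Directed (· ⊇ ·) fun N => omitting (Ioo m N) :=
    Antitone.directed_ge fun _ _ hNN' => omitting_antitone (Ioo_subset_Ioo_right hNN')
  refine exists_subset_nhds_of_isCompact hdir (fun N => (isClosed_omitting _).isCompact) ?_
  intro x hx
  refine hU.mem_nhds (hmU fun k hk => ?_)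
  exact Set.mem_iInter.mp hx (k + 1) k ⟨hk, k.lt_succ_self⟩

lemma OmegaCoverOf.exists_omitting_Ioo_subset {X : Set CantorSp} (hX : CFin ⊆ X)
    {𝒰 : Set (Set CantorSp)} (h𝒰 : OmegaCoverOf 𝒰 X) (m : ℕ) (G : Finset CantorSp)
    (hG : ↑G ⊆ X) : ∃ U ∈ 𝒰, ∃ N, ↑G ⊆ U ∧ m < N ∧ omitting (Ioo m N) ⊆ U := by
  classical
  have hfin : (Ioi m)ᶜ.Finite := by simp
  obtain ⟨U, hU𝒰, hFGU⟩ := h𝒰.2.2 ((omitting_finite hfin).toFinset ∪ G) (by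
    rw [Finset.coe_union, Set.Finite.coe_toFinset]
    exact Set.union_subset ((omitting_subset_CFin hfin).trans hX) hG)
  rw [Finset.coe_union, Set.Finite.coe_toFinset, Set.union_subset_iff] at hFGU
  obtain ⟨N, hN⟩ := IsOpen.exists_omitting_Ioo_subset (h𝒰.1 U hU𝒰) hFGU.1
  refine ⟨U, hU𝒰, max N (m + 1), hFGU.2, by omega, ?_⟩
  exact (omitting_antitone (Ioo_subset_Ioo_right (le_max_left _ _))).trans hN

lemma exists_injective_chain {X α : Type*} {Y : Set X} {𝒰 : Set (Set X)}
    (h𝒰 : ∀ V ∈ 𝒰, ¬ Y ⊆ V) (P : α → Set X → α → Prop)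
    (hstep : ∀ m (G : Finset X), ↑G ⊆ Y → ∃ U ∈ 𝒰, ∃ N, ↑G ⊆ U ∧ P m U N) (m₀ : α) :
    ∃ a : ℕ → α, a 0 = m₀ ∧ ∃ U : ℕ → Set X, (∀ n, U n ∈ 𝒰) ∧ Function.Injective U ∧
      ∀ n, P (a n) (U n) (a (n + 1)) := by
  classical
  have hstep' : ∀ m (G : {G : Finset X // ↑G ⊆ Y}),
      ∃ U ∈ 𝒰, ∃ N, ∃ y ∈ Y, y ∉ U ∧ ↑G.1 ⊆ U ∧ P m U N := by
    intro m G
    obtain ⟨U, hU𝒰, N, hGU, hP⟩ := hstep m G G.2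
    obtain ⟨y, hyY, hyU⟩ := Set.not_subset.mp (h𝒰 U hU𝒰)
    exact ⟨U, hU𝒰, N, y, hyY, hyU, hGU, hP⟩
  choose U hU𝒰 N y hyY hyU hGU hP using hstep'
  let s : ℕ → α × {G : Finset X // ↑G ⊆ Y} := fun n =>
    Nat.rec (m₀, ⟨∅, by simp⟩) (fun _ p =>
      (N p.1 p.2, ⟨insert (y p.1 p.2) p.2.1, by
        rw [Finset.coe_insert]; exact Set.insert_subset (hyY _ _) p.2.2⟩)) n
  have hsmono : Monotone fun n => (s n).2.1 :=
    monotone_nat_of_le_succ fun n => Finset.subset_insert _ _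
  refine ⟨fun n => (s n).1, rfl, fun n => U (s n).1 (s n).2, fun n => hU𝒰 _ _, ?_,
    fun n => hP _ _⟩
  refine Function.Injective.of_lt_imp_ne fun i j hij hUij => hyU (s i).1 (s i).2 ?_
  rw [hUij]
  exact hGU _ _ (hsmono (Nat.succ_le_of_lt hij) (Finset.mem_insert_self _ _))

/-- Galvin–Miller: For `Fin ⊆ X ⊆ 𝒫(ℕ)` and an open ω-cover `𝒰` of `X` by
open subsets of the Cantor space, there are a strictly increasing `a : ℕ → ℕ` with
`a 1 = 1` and pairwise distinct `U₁, U₂, … ∈ 𝒰` such that for each `n ≥ 1`, every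
`x ∈ 𝒫(ℕ)` omitting the open interval `(a n, a (n+1))` belongs to `U n`. -/
theorem stmt15 (X : Set CantorSp) (hX : CFin ⊆ X)
    (𝒰 : Set (Set CantorSp)) (h𝒰 : OmegaCoverOf 𝒰 X) :
    ∃ a : ℕ → ℕ, StrictMono a ∧ a 1 = 1 ∧
      ∃ U : ℕ → Set CantorSp,
        (∀ n, 1 ≤ n → U n ∈ 𝒰) ∧
        (∀ m n, 1 ≤ m → 1 ≤ n → U m = U n → m = n) ∧
        ∀ n, 1 ≤ n → ∀ x : CantorSp,
          (∀ k, a n < k → k < a (n + 1) → x k = false) → x ∈ U n := by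
  obtain ⟨a, ha0, U, hU𝒰, hUinj, hstep⟩ :=
    exists_injective_chain h𝒰.2.1 (fun m U N => m < N ∧ omitting (Ioo m N) ⊆ U)
      (fun m G hG => by simpa using h𝒰.exists_omitting_Ioo_subset hX m G hG) 1
  refine ⟨fun | 0 => 0 | n + 1 => a n, strictMono_nat_of_lt_succ ?_, ha0,
    fun n => U (n - 1), fun n _ => hU𝒰 _, ?_, ?_⟩
  · rintro (_ | n)
    · simp [ha0]
    · exact (hstep n).1
  · intro m n hm hn hmn
    have := hUinj hmn
    omega
  · rintro (_ | n) hn x hx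
    · omega
    · exact (hstep n).2 fun k hk => hx k hk.1 hk.2
end OmissionOfIntervals
end

section
/- Let X be a topological space and X = ⋃_n X_n an increasing union (X_1 ⊆ X_2 ⊆ ⋯) of subspaces, each of which satisfies S1(Γ,Γ). For each n, let U_n be a family of open subsets of X that is a point-cofinite cover of X_n (U_n is infinite, no member of U_n contains X_n, and every point of X_n belongs to all but finitely many members of U_n). Then there are sets U_n ∈ U_n such that every point of X belongs to U_n for all but finitely many n. -/
/-!
Let `P` be an `S1(Γ,Γ)` subspace and let every column `D n` be an infinite family of open sets
that is point-cofinite on `P`. Then each column can be shrunk to an infinite subfamily `E n` such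
that every point of `P` lies in all members of `E n` for almost all `n`. On columns whose traces
on `P` are infinite, these traces form a γ-cover of `P`; it splits into infinitely many disjoint
γ-covers, and selecting from all of them at once yields infinitely many members. On the other
columns, infinitely many members contain `P`.

Shrinking the columns `n ≥ k` in this way for `A 0, A 1, …` in turn gives nested refinements,
and choosing `U n` from the `(n+1)`-st refinement of column `n` works for every point of
`⋃ n, A n`.
-/

open Set Filter Cardinal

namespace OmissionOfIntervals

theorem PointCofiniteCover.mono {Y : Type*} [TopologicalSpace Y] {𝒰 𝒱 : Set (Set Y)}
    (h𝒰 : PointCofiniteCover 𝒰) (hsub : 𝒱 ⊆ 𝒰) (h𝒱 : 𝒱.Infinite) : PointCofiniteCover 𝒱 :=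
  ⟨fun V hV => h𝒰.1 V (hsub hV), h𝒱, fun y => (h𝒰.2.2 y).subset fun _ hV => ⟨hsub hV.1, hV.2⟩⟩

theorem S1GammaGamma.exists_selection {Y : Type*} [TopologicalSpace Y] (hY : S1GammaGamma Y)
    {κ : Type*} [Countable κ] (𝒱 : κ → Set (Set Y)) (h𝒱 : ∀ c, PointCofiniteCover (𝒱 c)) :
    ∃ V : κ → Set Y, (∀ c, V c ∈ 𝒱 c) ∧ ∀ y, ∀ᶠ c in cofinite, y ∈ V c := by
  cases isEmpty_or_nonempty κ
  · exact ⟨isEmptyElim, isEmptyElim, fun y => by simp [cofinite_eq_bot]⟩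
  obtain ⟨f, hf⟩ := exists_surjective_nat κ
  obtain ⟨W, hW𝒱, hWy⟩ := hY (𝒱 ∘ f) fun n => h𝒱 (f n)
  refine ⟨W ∘ Function.surjInv hf, fun c => ?_, fun y => ?_⟩
  · simpa only [Function.comp_apply, Function.surjInv_eq hf c] using hW𝒱 (Function.surjInv hf c)
  · rw [← Nat.cofinite_eq_atTop] at hWy
    exact (Function.injective_surjInv hf).tendsto_cofinite.eventually (hWy y)

/-- An enumeration `e` of a cover splits into the disjoint infinite pieces `{e (pair i s) | s}`,
each again a point-cofinite cover; one selection from every piece gives infinitely many distinct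
selections from the cover. -/
theorem S1GammaGamma.exists_infinite_subfamilies {Y : Type*} [TopologicalSpace Y]
    (hY : S1GammaGamma Y) {κ : Type*} [Countable κ] (𝒱 : κ → Set (Set Y))
    (h𝒱 : ∀ c, PointCofiniteCover (𝒱 c)) :
    ∃ 𝒲 : κ → Set (Set Y), (∀ c, 𝒲 c ⊆ 𝒱 c) ∧ (∀ c, (𝒲 c).Infinite) ∧
      ∀ y, ∀ᶠ c in cofinite, ∀ W ∈ 𝒲 c, y ∈ W := by
  let e c := (h𝒱 c).2.1.natEmbedding
  have he : ∀ c, Function.Injective fun r => (e c r : Set Y) :=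
    fun c => Subtype.val_injective.comp (e c).injective
  let piece : κ × ℕ → Set (Set Y) := fun p => range fun s => (e p.1 (Nat.pair p.2 s) : Set Y)
  have hpiece p : PointCofiniteCover (piece p) :=
    (h𝒱 p.1).mono (range_subset_iff.2 fun _ => (e _ _).2)
      (infinite_range_of_injective ((he p.1).comp fun _ _ h => (Nat.pair_eq_pair.1 h).2))
  obtain ⟨V, hV, hVy⟩ := hY.exists_selection piece hpiece
  choose s hs using hV
  dsimp only at hs
  refine ⟨fun c => range fun i => V (c, i), fun c => ?_, fun c => ?_, fun y => ?_⟩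
  · rintro _ ⟨i, rfl⟩
    beta_reduce
    rw [← hs (c, i)]
    exact (e _ _).2
  · refine infinite_range_of_injective fun i j hij => ?_
    rw [← hs (c, i), ← hs (c, j)] at hij
    exact (Nat.pair_eq_pair.1 (he c hij)).1
  · have hVy := hVy y
    rw [eventually_cofinite] at hVy ⊢
    refine (hVy.image Prod.fst).subset fun c hc => ?_
    obtain ⟨_, ⟨i, rfl⟩, hyV⟩ := not_forall₂.1 hc
    exact ⟨(c, i), hyV, rfl⟩

open scoped Set.Notation

theorem pointCofiniteCover_image_preimage_val {X : Type*} [TopologicalSpace X] {P : Set X}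
    {D : Set (Set X)} (hopen : ∀ V ∈ D, IsOpen V)
    (hpc : ∀ x ∈ P, {V ∈ D | x ∉ V}.Finite) (htr : ((P ↓∩ ·) '' D).Infinite) :
    PointCofiniteCover ((P ↓∩ ·) '' D) := by
  refine ⟨?_, htr, fun y => ((hpc y y.2).image (P ↓∩ ·)).subset ?_⟩
  · rintro _ ⟨V, hV, rfl⟩
    exact (hopen V hV).preimage continuous_subtype_val
  · rintro _ ⟨⟨V, hV, rfl⟩, hyV⟩
    exact ⟨V, ⟨hV, hyV⟩, rfl⟩

/-- Only finitely many traces means some trace `w` is the trace of infinitely many members, and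
`w` contains every point of `P` because all but finitely many members do. -/
theorem infinite_sep_superset_of_finite_image_preimage_val {X : Type*} {P : Set X}
    {D : Set (Set X)} (hD : D.Infinite)
    (hpc : ∀ x ∈ P, {V ∈ D | x ∉ V}.Finite) (htr : ((P ↓∩ ·) '' D).Finite) :
    {V ∈ D | P ⊆ V}.Infinite := by
  obtain ⟨w, -, hw⟩ : ∃ w ∈ (P ↓∩ ·) '' D, (D ∩ (P ↓∩ ·) ⁻¹' {w}).Infinite := by
    by_contra! h
    exact hD (Finite.of_finite_fibers _ htr h)
  refine hw.mono fun V hV => ⟨hV.1, fun x hx => ?_⟩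
  obtain ⟨V', ⟨hV'D, hV'w⟩, hxV'⟩ := hw.exists_notMem_finite (hpc x hx)
  have hx' : (⟨x, hx⟩ : P) ∈ P ↓∩ V' := by
    by_contra h
    exact hxV' ⟨hV'D, h⟩
  rw [mem_preimage, mem_singleton_iff] at hV'w
  rwa [hV'w, ← hV.2] at hx'

theorem S1GammaGamma.exists_infinite_subfamilies_of_subspace {X : Type*} [TopologicalSpace X]
    {P : Set X} (hP : S1GammaGamma P) {κ : Type*} [Countable κ] (D : κ → Set (Set X))
    (hopen : ∀ c, ∀ V ∈ D c, IsOpen V) (hinf : ∀ c, (D c).Infinite)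
    (hpc : ∀ c, ∀ x ∈ P, {V ∈ D c | x ∉ V}.Finite) :
    ∃ E : κ → Set (Set X), (∀ c, E c ⊆ D c) ∧ (∀ c, (E c).Infinite) ∧
      ∀ x ∈ P, ∀ᶠ c in cofinite, ∀ V ∈ E c, x ∈ V := by
  classical
  obtain ⟨𝒲, h𝒲, h𝒲inf, h𝒲y⟩ := hP.exists_infinite_subfamilies
    (fun c : {c // ((P ↓∩ ·) '' D c).Infinite} => (P ↓∩ ·) '' D c)
    fun c => pointCofiniteCover_image_preimage_val (hopen c) (hpc c) c.2
  refine ⟨fun c => if h : ((P ↓∩ ·) '' D c).Infinite then {V ∈ D c | P ↓∩ V ∈ 𝒲 ⟨c, h⟩}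
    else {V ∈ D c | P ⊆ V}, fun c => ?_, fun c => ?_, fun x hx => ?_⟩ <;> beta_reduce
  · split_ifs <;> exact sep_subset _ _
  · split_ifs with h
    · refine fun hfin => h𝒲inf ⟨c, h⟩ ((hfin.image (P ↓∩ ·)).subset fun W hW => ?_)
      obtain ⟨V, hV, rfl⟩ := h𝒲 _ hW
      exact ⟨V, ⟨hV, hW⟩, rfl⟩
    · exact infinite_sep_superset_of_finite_image_preimage_val (hinf c) (hpc c) (not_infinite.1 h)
  · have hy := h𝒲y ⟨x, hx⟩
    rw [eventually_cofinite] at hy ⊢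
    refine (hy.image Subtype.val).subset fun c hc => ?_
    obtain ⟨V, hV, hxV⟩ := not_forall₂.1 hc
    split_ifs at hV with h
    · exact ⟨⟨c, h⟩, not_forall₂.2 ⟨_, hV.2, hxV⟩, rfl⟩
    · exact absurd (hV.2 hx) hxV

theorem S1GammaGamma.exists_infinite_subfamilies_of_subspace_of_le {X : Type*}
    [TopologicalSpace X] {P : Set X} (hP : S1GammaGamma P) (k : ℕ) (D : ℕ → Set (Set X))
    (hopen : ∀ n, ∀ V ∈ D n, IsOpen V) (hinf : ∀ n, (D n).Infinite)
    (hpc : ∀ n, k ≤ n → ∀ x ∈ P, {V ∈ D n | x ∉ V}.Finite) :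
    ∃ E : ℕ → Set (Set X), (∀ n, E n ⊆ D n) ∧ (∀ n, (E n).Infinite) ∧
      ∀ x ∈ P, ∀ᶠ n in atTop, ∀ V ∈ E n, x ∈ V := by
  obtain ⟨E, hED, hEinf, hEx⟩ := hP.exists_infinite_subfamilies_of_subspace
    (fun n : {n // k ≤ n} => D n) (fun n => hopen n) (fun n => hinf n) fun n => hpc n n.2
  refine ⟨fun n => if h : k ≤ n then E ⟨n, h⟩ else D n, fun n => ?_, fun n => ?_, fun x hx => ?_⟩
  · dsimp only
    split_ifs
    exacts [hED _, subset_rfl]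
  · dsimp only
    split_ifs
    exacts [hEinf _, hinf n]
  · have hEx := hEx x hx
    rw [eventually_cofinite] at hEx
    rw [← Nat.cofinite_eq_atTop, eventually_cofinite]
    refine ((finite_Iio k).union (hEx.image Subtype.val)).subset fun n hn => ?_
    by_cases h : k ≤ n
    · exact Or.inr ⟨⟨n, h⟩, by simpa [h] using hn, rfl⟩
    · exact Or.inl (not_le.1 h)

theorem exists_nested_refinements {X : Type*} [TopologicalSpace X] {A : ℕ → Set X}
    (hmono : Monotone A) (hS1 : ∀ n, S1GammaGamma (A n)) (𝒰 : ℕ → Set (Set X))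
    (hopen : ∀ n, ∀ U ∈ 𝒰 n, IsOpen U) (hinf : ∀ n, (𝒰 n).Infinite)
    (hpc : ∀ n, ∀ x ∈ A n, {U ∈ 𝒰 n | x ∉ U}.Finite) :
    ∃ T : ℕ → ℕ → Set (Set X), (∀ k n, T k n ⊆ 𝒰 n ∧ (T k n).Infinite) ∧
      (∀ n, Antitone fun k => T k n) ∧ ∀ k, ∀ x ∈ A k, ∀ᶠ n in atTop, ∀ V ∈ T (k + 1) n, x ∈ V := by
  -- stated as `∃ E, _ → _` so that `choose` yields a refinement function defined on all `D`
  have step : ∀ (k : ℕ) (D : ℕ → Set (Set X)), ∃ E : ℕ → Set (Set X),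
      (∀ n, D n ⊆ 𝒰 n ∧ (D n).Infinite) → (∀ n, E n ⊆ D n) ∧ (∀ n, (E n).Infinite) ∧
        ∀ x ∈ A k, ∀ᶠ n in atTop, ∀ V ∈ E n, x ∈ V := by
    intro k D
    by_cases hD : ∀ n, D n ⊆ 𝒰 n ∧ (D n).Infinite
    · obtain ⟨E, hE⟩ := (hS1 k).exists_infinite_subfamilies_of_subspace_of_le k D
        (fun n V hV => hopen n V ((hD n).1 hV)) (fun n => (hD n).2)
        fun n hkn x hx => (hpc n x (hmono hkn hx)).subset fun _ hV => ⟨(hD n).1 hV.1, hV.2⟩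
      exact ⟨E, fun _ => hE⟩
    · exact ⟨D, fun h => absurd h hD⟩
  choose next hnext using step
  let T : ℕ → ℕ → Set (Set X) := fun k => Nat.rec 𝒰 next k
  have hT : ∀ k n, T k n ⊆ 𝒰 n ∧ (T k n).Infinite := by
    intro k
    induction k with
    | zero => exact fun n => ⟨subset_rfl, hinf n⟩
    | succ k ih =>
      exact fun n => ⟨((hnext k (T k) ih).1 n).trans (ih n).1, (hnext k (T k) ih).2.1 n⟩
  exact ⟨T, hT, fun n => antitone_nat_of_succ_le fun k => (hnext k (T k) (hT k)).1 n,
    fun k => (hnext k (T k) (hT k)).2.2⟩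

theorem stmt16_general (X : Type*) [TopologicalSpace X] (A : ℕ → Set X)
    (hmono : ∀ n, A n ⊆ A (n + 1)) (hunion : ⋃ n, A n = Set.univ)
    (hS1 : ∀ n, S1GammaGamma ↥(A n))
    (𝒰 : ℕ → Set (Set X))
    (hopen : ∀ n, ∀ U ∈ 𝒰 n, IsOpen U)
    (hinf : ∀ n, (𝒰 n).Infinite)
    (hpc : ∀ n, ∀ x ∈ A n, {U ∈ 𝒰 n | x ∉ U}.Finite) :
    ∃ U : ℕ → Set X, (∀ n, U n ∈ 𝒰 n) ∧ ∀ x : X, ∀ᶠ n in atTop, x ∈ U n := by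
  obtain ⟨T, hT, hTanti, hTA⟩ :=
    exists_nested_refinements (monotone_nat_of_le_succ hmono) hS1 𝒰 hopen hinf hpc
  have hne n : (T (n + 1) n).Nonempty := (hT (n + 1) n).2.nonempty
  refine ⟨fun n => (hne n).some, fun n => (hT (n + 1) n).1 (hne n).some_mem, fun x => ?_⟩
  obtain ⟨k, hxk⟩ := mem_iUnion.1 (hunion ▸ mem_univ x)
  filter_upwards [hTA k x hxk, eventually_ge_atTop k] with n hn hkn
  exact hn _ (hTanti n (by omega) (hne n).some_mem)

/-- Jordan: If `X = ⋃ₙ Xₙ` is an increasing union of `S1(Γ,Γ)` subspaces and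
each `𝒰 n` is a point-cofinite cover of `Xₙ` by open subsets of `X`, then one may select
`Uₙ ∈ 𝒰 n` with every point of `X` in `Uₙ` for all but finitely many `n`. -/
theorem stmt16 (X : Type*) [TopologicalSpace X] (A : ℕ → Set X)
    (hmono : ∀ n, A n ⊆ A (n + 1)) (hunion : ⋃ n, A n = Set.univ)
    (hS1 : ∀ n, S1GammaGamma ↥(A n))
    (𝒰 : ℕ → Set (Set X))
    (hopen : ∀ n, ∀ U ∈ 𝒰 n, IsOpen U)
    (hinf : ∀ n, (𝒰 n).Infinite)
    (hntriv : ∀ n, ∀ U ∈ 𝒰 n, ¬ A n ⊆ U)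
    (hpc : ∀ n, ∀ x ∈ A n, {U ∈ 𝒰 n | x ∉ U}.Finite) :
    ∃ U : ℕ → Set X, (∀ n, U n ∈ 𝒰 n) ∧ ∀ x : X, ∀ᶠ n in atTop, x ∈ U n :=
  stmt16_general X A hmono hunion hS1 𝒰 hopen hinf hpc
end OmissionOfIntervals
end

section
/- For each family Y ⊆ [ℕ]^∞ with |Y| < 𝔡 and each a ∈ [ℕ]^∞, there is a set s ∈ [ℕ]^∞ whose complement ℕ ∖ s is also infinite, such that (identifying infinite sets with their increasing enumerations) y(n) ≤ s(n) for infinitely many n, for every y ∈ Y, and a(n) ≤ (ℕ ∖ s)(n) for infinitely many n. -/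
open Set Filter Cardinal

namespace OmissionOfIntervals

/-!
Take `s = ⋃ j, [d j, e j)` with `d j < e j < d (j + 1)`. Since `e j ∉ s` has at most `d j`
predecessors outside `s`, and `d (j + 1) ∈ s` has at most `e j` predecessors in `s`, it
suffices that `a (d j) ≤ e j` for all `j` and that, for each `y ∈ Y`, `y (e j) ≤ d (j + 1)`
for infinitely many `j`. Put `e j = a (d j) + 1` and `d (j + 1) = F (d j)`, where `F` is
increasing and not dominated by any of the fewer than `𝔡` functions `g ∘ g`,
`g = y ∘ (a + 1)`: if `d j ≤ x < d (j + 1)` and `g (g x) < F x`, then either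
`g (d j) < d (j + 1)` or `g (d (j + 1)) < d (j + 2)`.
-/

theorem _root_.Nat.count_le_of_forall_lt {p : ℕ → Prop} [DecidablePred p] {n m : ℕ}
    (h : ∀ k < n, p k → k < m) : Nat.count p n ≤ m := by
  rw [Nat.count_eq_card_filter_range]
  refine (Finset.card_le_card fun k hk => ?_).trans_eq (Finset.card_range m)
  simp only [Finset.mem_filter, Finset.mem_range] at hk ⊢
  exact h k hk.1 hk.2

theorem _root_.Nat.frequently_le_nth {p : ℕ → Prop} [DecidablePred p] {u b : ℕ → ℕ}
    (hu : StrictMono u) (hp : ∀ j, p (u j)) (h : ∃ᶠ j in atTop, b (Nat.count p (u j)) ≤ u j) :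
    ∃ᶠ n in atTop, b n ≤ Nat.nth p n := by
  have hcount : StrictMono fun j => Nat.count p (u j) :=
    fun i j hij => Nat.count_strict_mono (hp i) (hu hij)
  refine hcount.tendsto_atTop.frequently_map _ (fun j hj => ?_) h
  rwa [Nat.nth_count (hp j)]

theorem _root_.StrictMono.exists_le_lt_succ {d : ℕ → ℕ} (hd : StrictMono d) {x : ℕ}
    (hx : d 0 ≤ x) : ∃ j, d j ≤ x ∧ x < d (j + 1) := by
  have hex : ∃ j, x < d (j + 1) := ⟨x, (Nat.lt_succ_self x).trans_le hd.le_apply⟩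
  refine ⟨Nat.find hex, ?_, Nat.find_spec hex⟩
  rcases hj : Nat.find hex with _ | i
  · exact hx
  · exact not_lt.mp (Nat.find_min hex (hj ▸ Nat.lt_succ_self i))

theorem exists_strictMono_gt (h : ℕ → ℕ) : ∃ F : ℕ → ℕ, StrictMono F ∧ ∀ x, h x < F x := by
  refine ⟨fun x => ∑ i ∈ Finset.range (x + 1), (h i + 1), ?_, fun x => ?_⟩
  · refine strictMono_nat_of_lt_succ fun x => ?_
    rw [Finset.sum_range_succ _ (x + 1)]
    omega
  · simp only [Finset.sum_range_succ]
    omega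

theorem frequently_apply_lt_apply_succ {g F d : ℕ → ℕ} (hg : Monotone g) (hF : Monotone F)
    (hd : StrictMono d) (hdF : ∀ j, d (j + 1) = F (d j))
    (hgF : ∃ᶠ x in atTop, g (g x) < F x) : ∃ᶠ j in atTop, g (d j) < d (j + 1) := by
  refine frequently_atTop.mpr fun N => ?_
  obtain ⟨x, hNx, hx⟩ := frequently_atTop.mp hgF (d N)
  obtain ⟨j, hjx, hxj⟩ := hd.exists_le_lt_succ ((hd.monotone N.zero_le).trans hNx)
  have hNj : N ≤ j := Nat.lt_succ_iff.mp (hd.lt_iff_lt.mp (hNx.trans_lt hxj))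
  by_cases hgx : g x < d (j + 1)
  · exact ⟨j, hNj, (hg hjx).trans_lt hgx⟩
  · refine ⟨j + 1, hNj.trans j.le_succ, ?_⟩
    calc g (d (j + 1)) ≤ g (g x) := hg (not_lt.mp hgx)
      _ < F x := hx
      _ ≤ F (d (j + 1)) := hF hxj.le
      _ = d (j + 1 + 1) := (hdF _).symm

theorem exists_frequently_lt_of_mk_lt_frd {G : Set (ℕ → ℕ)} (hG : #G < frd) :
    ∃ f : ℕ → ℕ, ∀ g ∈ G, ∃ᶠ x in atTop, g x < f x := by
  have hG : ¬ Dominating G := fun hdom =>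
    (csInf_le' (s := {c | ∃ S, Dominating S ∧ #S = c}) ⟨G, hdom, rfl⟩).not_gt hG
  simp only [Dominating, LeStar] at hG
  push Not at hG
  exact hG

open Classical in
noncomputable def intervalUnion (d e : ℕ → ℕ) : CantorSp :=
  fun n => decide (∃ j, d j ≤ n ∧ n < e j)

section IntervalUnion

variable {d e : ℕ → ℕ}

theorem strictMono_of_lt_of_lt_succ (hde : ∀ j, d j < e j) (hed : ∀ j, e j < d (j + 1)) :
    StrictMono d :=
  strictMono_nat_of_lt_succ fun j => (hde j).trans (hed j)

theorem intervalUnion_eq_true_iff {n : ℕ} :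
    intervalUnion d e n = true ↔ ∃ j, d j ≤ n ∧ n < e j := by
  simp [intervalUnion]

theorem intervalUnion_apply_left (hde : ∀ j, d j < e j) (j : ℕ) :
    intervalUnion d e (d j) = true :=
  intervalUnion_eq_true_iff.mpr ⟨j, le_rfl, hde j⟩

theorem intervalUnion_apply_right (hde : ∀ j, d j < e j) (hed : ∀ j, e j < d (j + 1)) (j : ℕ) :
    intervalUnion d e (e j) = false := by
  have hd : StrictMono d := strictMono_of_lt_of_lt_succ hde hed
  have he : StrictMono e := strictMono_of_lt_of_lt_succ hed fun j => hde (j + 1)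
  refine Bool.eq_false_iff.mpr fun hj => ?_
  obtain ⟨i, hdi, hie⟩ := intervalUnion_eq_true_iff.mp hj
  rcases lt_or_ge j i with hji | hij
  · exact (hed j).not_ge ((hd.monotone hji).trans hdi)
  · exact hie.not_ge (he.monotone hij)

theorem count_intervalUnion_le (hde : ∀ j, d j < e j) (hed : ∀ j, e j < d (j + 1)) (j : ℕ) :
    Nat.count (intervalUnion d e · = true) (d (j + 1)) ≤ e j := by
  have hd : StrictMono d := strictMono_of_lt_of_lt_succ hde hed
  have he : StrictMono e := strictMono_of_lt_of_lt_succ hed fun j => hde (j + 1)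
  refine Nat.count_le_of_forall_lt fun k hk hks => ?_
  obtain ⟨i, hdi, hie⟩ := intervalUnion_eq_true_iff.mp hks
  have hij : i ≤ j := Nat.lt_succ_iff.mp (hd.lt_iff_lt.mp (hdi.trans_lt hk))
  exact hie.trans_le (he.monotone hij)

theorem count_not_intervalUnion_le (j : ℕ) :
    Nat.count (fun n => (!intervalUnion d e n) = true) (e j) ≤ d j := by
  refine Nat.count_le_of_forall_lt fun k hk hks => not_le.mp fun hdk => ?_
  simp only [Bool.not_eq_true', Bool.eq_false_iff] at hks
  exact hks (intervalUnion_eq_true_iff.mpr ⟨j, hdk, hk⟩)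

theorem intervalUnion_mem_CInf (hde : ∀ j, d j < e j) (hed : ∀ j, e j < d (j + 1)) :
    intervalUnion d e ∈ CInf :=
  Set.infinite_of_injective_forall_mem (strictMono_of_lt_of_lt_succ hde hed).injective
    (intervalUnion_apply_left hde)

theorem not_intervalUnion_mem_CInf (hde : ∀ j, d j < e j) (hed : ∀ j, e j < d (j + 1)) :
    (fun n => !intervalUnion d e n) ∈ CInf :=
  Set.infinite_of_injective_forall_mem (f := e)
    (strictMono_of_lt_of_lt_succ hed fun j => hde (j + 1)).injective
    fun j => by simp [intervalUnion_apply_right hde hed j]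

theorem frequently_le_enum_intervalUnion (hde : ∀ j, d j < e j) (hed : ∀ j, e j < d (j + 1))
    {b : ℕ → ℕ} (hb : Monotone b) (h : ∃ᶠ j in atTop, b (e j) ≤ d (j + 1)) :
    ∃ᶠ n in atTop, b n ≤ enum (intervalUnion d e) n :=
  Nat.frequently_le_nth
    (fun i j hij => (strictMono_of_lt_of_lt_succ hde hed) (by omega))
    (fun j => intervalUnion_apply_left hde (j + 1))
    (h.mono fun j hj => (hb (count_intervalUnion_le hde hed j)).trans hj)

theorem frequently_le_enum_not_intervalUnion (hde : ∀ j, d j < e j)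
    (hed : ∀ j, e j < d (j + 1)) {b : ℕ → ℕ} (hb : Monotone b)
    (h : ∃ᶠ j in atTop, b (d j) ≤ e j) :
    ∃ᶠ n in atTop, b n ≤ enum (fun n => !intervalUnion d e n) n :=
  Nat.frequently_le_nth (strictMono_of_lt_of_lt_succ hed fun j => hde (j + 1))
    (fun j => by simp [intervalUnion_apply_right hde hed j])
    (h.mono fun j hj => (hb (count_not_intervalUnion_le j)).trans hj)

end IntervalUnion

/-- For each `Y ⊆ [ℕ]^∞` with `|Y| < 𝔡` and each `a ∈ [ℕ]^∞`, there is
`s ∈ [ℕ]^∞` with infinite complement such that `y(n) ≤ s(n)` for infinitely many `n` for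
each `y ∈ Y`, and `a(n) ≤ (ℕ ∖ s)(n)` for infinitely many `n`. -/
theorem stmt17 (Y : Set CantorSp) (hY : Y ⊆ CInf) (hcard : #Y < frd)
    (a : CantorSp) (ha : a ∈ CInf) :
    ∃ s : CantorSp, s ∈ CInf ∧ (fun n => !s n) ∈ CInf ∧
      (∀ y ∈ Y, {n | enum y n ≤ enum s n}.Infinite) ∧
      {n | enum a n ≤ enum (fun n => !s n) n}.Infinite := by
  have haS : StrictMono (enum a) := Nat.nth_strictMono ha
  set A : ℕ → ℕ := fun x => enum a x + 1
  obtain ⟨f, hf⟩ := exists_frequently_lt_of_mk_lt_frd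
    (G := (fun y x => enum y (A (enum y (A x)))) '' Y) (mk_image_le.trans_lt hcard)
  obtain ⟨F, hF, hAF⟩ := exists_strictMono_gt fun x => A x + f x
  set d : ℕ → ℕ := fun j => F^[j] 0
  have hdF : ∀ j, d (j + 1) = F (d j) := fun j => Function.iterate_succ_apply' F j 0
  have hde : ∀ j, d j < A (d j) := fun j => Nat.lt_succ_of_le haS.le_apply
  have hed : ∀ j, A (d j) < d (j + 1) := fun j => hdF j ▸ le_self_add.trans_lt (hAF (d j))
  refine ⟨intervalUnion d (A ∘ d), intervalUnion_mem_CInf hde hed,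
    not_intervalUnion_mem_CInf hde hed, fun y hy => ?_, ?_⟩
  · have hyS : StrictMono (enum y) := Nat.nth_strictMono (hY hy)
    have hgg : ∃ᶠ x in atTop, enum y (A (enum y (A x))) < F x :=
      (hf _ ⟨y, hy, rfl⟩).mono fun x hx => hx.trans (le_add_self.trans_lt (hAF x))
    refine Nat.frequently_atTop_iff_infinite.mp
      (frequently_le_enum_intervalUnion hde hed hyS.monotone ?_)
    exact (frequently_apply_lt_apply_succ (hyS.monotone.comp (haS.monotone.add_const 1))
      hF.monotone (strictMono_of_lt_of_lt_succ hde hed) hdF hgg).mono fun j hj => hj.le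
  · exact Nat.frequently_atTop_iff_infinite.mp (frequently_le_enum_not_intervalUnion hde hed
      haS.monotone (Frequently.of_forall fun j => Nat.le_succ _))
end OmissionOfIntervals
end
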